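/- arXiv:1808.00596 — 6 statements merged into one kernel-verified Lean document; each statement's English description precedes it below -/
import Mathlib

section
/- If Γ is residually finite with a decreasing sequence (Δ_n) of finite-index subgroups having trivial intersection, then for k, n ∈ ℕ⁺, the set P(k, n) of all maps x : Γ → {0, 1/k, …, (k−1)/k} that are constant on the right cosets of Δ_n is finite, shift-invariant, and the uniform probability measures on P(k, n) converge weak-* to the product Lebesgue measure λ^Γ as k, n → ∞. -/
/-!
For large `n`, the finitely many coordinates that a continuous test function essentially depends
on lie in distinct right cosets of `Δ n`, so one can choose coset representatives containing them.
Rounding a `λ^Γ`-random point down to the grid `Q_k` at the representatives and spreading these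
values over the cosets produces exactly the uniform measure on `P(k, n)`: every point of `P(k, n)`
is hit with probability `k^{-[Γ : Δ n]}`. The rounded point is `1/k`-close to the original one on
the relevant coordinates, whence the integrals converge.
-/

open MeasureTheory Filter Topology ProbabilityTheory Set Function
open scoped ENNReal

theorem Set.InjOn.exists_rightInverse_leftInvOn {α β : Type*} {f : α → β} {s : Set α}
    (hs : s.InjOn f) (hf : Surjective f) : ∃ g : β → α, RightInverse g f ∧ LeftInvOn g f s := by
  refine ⟨extend (s.domRestrict f) Subtype.val (surjInv hf), fun b => ?_,
    fun a ha => hs.injective.extend_apply _ _ ⟨a, ha⟩⟩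
  by_cases hb : ∃ a, s.domRestrict f a = b
  · obtain ⟨a, rfl⟩ := hb
    exact congrArg f (hs.injective.extend_apply _ _ a)
  · rw [extend_apply' _ _ _ hb]
    exact surjInv_eq hf b

theorem dist_integral_le_of_forall_dist_le {α E : Type*} [MeasurableSpace α]
    [NormedAddCommGroup E] [NormedSpace ℝ E] {μ : Measure α} [IsProbabilityMeasure μ]
    {f g : α → E} (hf : Integrable f μ) (hg : Integrable g μ) {C : ℝ}
    (h : ∀ x, dist (f x) (g x) ≤ C) : dist (∫ x, f x ∂μ) (∫ x, g x ∂μ) ≤ C := by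
  rw [dist_eq_norm, ← integral_sub hf hg]
  simpa using norm_integral_le_of_norm_le_const (μ := μ)
    (Eventually.of_forall fun x => (dist_eq_norm (f x) (g x)) ▸ h x)

theorem eq_uniformOn_of_measure_singleton_eq {α : Type*} [MeasurableSpace α]
    [MeasurableSingletonClass α] {μ : Measure α} [IsProbabilityMeasure μ] {s : Set α}
    (hs : s.Finite) (hμs : μ sᶜ = 0) {c : ℝ≥0∞} (hc : ∀ x ∈ s, μ {x} = c) :
    μ = uniformOn s := by
  classical
  lift s to Finset α using hs
  have hmass : ∀ t ⊆ s, μ t = t.card * c := fun t ht => by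
    rw [← sum_measure_singleton, Finset.sum_congr rfl fun x hx => hc x (ht hx),
      Finset.sum_const, nsmul_eq_mul]
  have hc_eq : c = (s.card : ℝ≥0∞)⁻¹ := by
    refine ENNReal.eq_inv_of_mul_eq_one_left ?_
    rw [mul_comm, ← hmass s subset_rfl, ← measure_univ (μ := μ),
      ← measure_inter_conull hμs (s := univ), univ_inter]
  ext A -
  let t := s.filter (· ∈ A)
  have hA : (s ∩ A : Set α) = t := by ext; simp [t]
  rw [← measure_inter_conull hμs, inter_comm, ← uniformOn_inter_self s.finite_toSet, hA,
    hmass t (Finset.filter_subset _ _), uniformOn_apply_finset,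
    Finset.inter_eq_right.2 (Finset.filter_subset _ _), hc_eq, div_eq_mul_inv]

theorem exists_finite_modulus_of_uniformContinuous {ι X Y : Type*} [PseudoMetricSpace X]
    [PseudoMetricSpace Y] {f : (ι → X) → Y} (hf : UniformContinuous f) {ε : ℝ} (hε : 0 < ε) :
    ∃ (F : Set ι) (δ : ι → ℝ), F.Finite ∧ (∀ i ∈ F, 0 < δ i) ∧
      ∀ x y : ι → X, (∀ i ∈ F, dist (x i) (y i) < δ i) → dist (f x) (f y) < ε := by
  have hbasis := Pi.uniformity (fun _ : ι => X) ▸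
    HasBasis.iInf' fun i => Metric.uniformity_basis_dist.comap fun a : (ι → X) × (ι → X) =>
      (a.1 i, a.2 i)
  obtain ⟨⟨F, δ⟩, ⟨hF, hδ⟩, h⟩ := (hbasis.tendsto_iff Metric.uniformity_basis_dist).1 hf ε hε
  exact ⟨F, δ, hF, hδ, fun x y hxy => h (x, y) (mem_iInter₂.2 hxy)⟩

namespace unitInterval

def gridPoints (k : ℕ) : Set unitInterval := {t | ∃ i : ℕ, i < k ∧ (t : ℝ) = i / k}

theorem finite_gridPoints (k : ℕ) : (gridPoints k).Finite :=
  (((finite_Iio k).image fun i : ℕ => (i : ℝ) / k).preimage Subtype.val_injective.injOn).subset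
    fun _ ⟨i, hi, ht⟩ => ⟨i, hi, ht.symm⟩

/-- The last cell `[(k - 1) / k, 1]` is closed, so that `r = 1` gets index `k - 1`. -/
noncomputable def gridIndex (k : ℕ) (r : ℝ) : ℕ := min ⌊k * r⌋₊ (k - 1)

theorem gridIndex_lt {k : ℕ} (hk : k ≠ 0) (r : ℝ) : gridIndex k r < k := by
  unfold gridIndex
  omega

theorem gridIndex_le_mul_le {k : ℕ} {r : ℝ} (h0 : 0 ≤ r) (h1 : r ≤ 1) :
    (gridIndex k r : ℝ) ≤ k * r ∧ k * r ≤ gridIndex k r + 1 := by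
  have hkr : 0 ≤ (k : ℝ) * r := by positivity
  rcases le_total ⌊(k : ℝ) * r⌋₊ (k - 1) with h | h
  · rw [gridIndex, min_eq_left h]
    exact ⟨Nat.floor_le hkr, (Nat.lt_floor_add_one _).le⟩
  · rw [gridIndex, min_eq_right h]
    refine ⟨(Nat.cast_le.2 h).trans (Nat.floor_le hkr), ?_⟩
    calc (k : ℝ) * r ≤ k := mul_le_of_le_one_right (Nat.cast_nonneg k) h1
      _ ≤ ((k - 1 : ℕ) : ℝ) + 1 := by exact_mod_cast (by omega : k ≤ k - 1 + 1)

theorem gridIndex_eq {k i : ℕ} {r : ℝ} (hi : i < k) (h : i ≤ k * r) (h' : k * r < i + 1) :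
    gridIndex k r = i := by
  rw [gridIndex, (Nat.floor_eq_iff ((Nat.cast_nonneg i).trans h)).2 ⟨h, h'⟩]
  omega

noncomputable def quantize (k : ℕ) (t : unitInterval) : unitInterval :=
  projIcc 0 1 zero_le_one (gridIndex k t / k)

theorem coe_quantize (k : ℕ) (t : unitInterval) : (quantize k t : ℝ) = gridIndex k t / k := by
  rw [quantize, projIcc_of_mem]
  refine ⟨by positivity, div_le_one_of_le₀ ?_ (Nat.cast_nonneg k)⟩
  exact_mod_cast (min_le_right _ _).trans (Nat.sub_le k 1)

theorem quantize_mem_gridPoints {k : ℕ} (hk : k ≠ 0) (t : unitInterval) :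
    quantize k t ∈ gridPoints k :=
  ⟨gridIndex k t, gridIndex_lt hk t, coe_quantize k t⟩

theorem quantize_eq_iff {k i : ℕ} (hk : k ≠ 0) {t q : unitInterval} (hq : (q : ℝ) = i / k) :
    quantize k t = q ↔ gridIndex k t = i := by
  rw [← Subtype.coe_inj, coe_quantize, hq, div_left_inj' (by positivity), Nat.cast_inj]

theorem dist_quantize_le {k : ℕ} (hk : k ≠ 0) (t : unitInterval) :
    dist (quantize k t) t ≤ 1 / k := by
  obtain ⟨h, h'⟩ := gridIndex_le_mul_le (k := k) t.2.1 t.2.2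
  have hk0 : (0 : ℝ) < k := by positivity
  rw [Subtype.dist_eq, coe_quantize, Real.dist_eq,
    show (gridIndex k t : ℝ) / k - t = (gridIndex k t - k * t) / k by field_simp, abs_div,
    abs_of_pos hk0, div_le_div_iff_of_pos_right hk0, abs_le]
  constructor <;> linarith

theorem measurable_quantize (k : ℕ) : Measurable (quantize k) :=
  (measurable_from_nat (f := fun m : ℕ => projIcc (0 : ℝ) 1 zero_le_one (m / k))).comp
    ((measurable_const.mul measurable_subtype_coe).nat_floor.min measurable_const)

theorem volume_image_preimage_quantize {k i : ℕ} (hi : i < k) {q : unitInterval}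
    (hq : (q : ℝ) = i / k) :
    volume (((↑) : unitInterval → ℝ) '' (quantize k ⁻¹' {q})) = ENNReal.ofReal (1 / k) := by
  have hk : k ≠ 0 := by omega
  have hk0 : (0 : ℝ) < k := by positivity
  have hlen : ((i : ℝ) + 1) / k - i / k = 1 / k := by ring
  apply le_antisymm
  · calc _ ≤ volume (Icc ((i : ℝ) / k) ((i + 1) / k)) := measure_mono ?_
      _ = _ := by rw [Real.volume_Icc, hlen]
    rintro _ ⟨t, ht, rfl⟩
    rw [mem_preimage, mem_singleton_iff, quantize_eq_iff hk hq] at ht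
    obtain ⟨h, h'⟩ := ht ▸ gridIndex_le_mul_le (k := k) t.2.1 t.2.2
    constructor
    · rw [div_le_iff₀ hk0]; linarith
    · rw [le_div_iff₀ hk0]; linarith
  · calc _ = volume (Ico ((i : ℝ) / k) ((i + 1) / k)) := by rw [Real.volume_Ico, hlen]
      _ ≤ _ := measure_mono ?_
    rintro r ⟨h, h'⟩
    have hr1 : r ≤ 1 := h'.le.trans (div_le_one_of_le₀ (by exact_mod_cast hi) hk0.le)
    refine ⟨⟨r, (by positivity : (0 : ℝ) ≤ i / k).trans h, hr1⟩, ?_, rfl⟩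
    rw [mem_preimage, mem_singleton_iff, quantize_eq_iff hk hq]
    exact gridIndex_eq hi ((div_le_iff₀' hk0).1 h) ((lt_div_iff₀' hk0).1 h')

end unitInterval

def IsProductLebesgue {Γ : Type*} (μ : Measure (Γ → unitInterval)) : Prop :=
  ∀ (F : Finset Γ) (A : Γ → Set unitInterval), (∀ γ, MeasurableSet (A γ)) →
    μ {x | ∀ γ ∈ F, x γ ∈ A γ} = ∏ γ ∈ F, volume (Subtype.val '' A γ)

section CosetConstGridMaps

open QuotientGroup
open unitInterval (gridPoints finite_gridPoints quantize measurable_quantize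
  quantize_mem_gridPoints volume_image_preimage_quantize dist_quantize_le)

variable {Γ : Type*} [Group Γ] {Δ : Subgroup Γ} {k : ℕ}

instance Subgroup.finite_quotient_rightRel (Δ : Subgroup Γ) [Δ.FiniteIndex] :
    Finite (Quotient (rightRel Δ)) :=
  .of_equiv _ (quotientRightRelEquivQuotientLeftRel Δ).symm

theorem eventually_injOn_mk_rightRel {Δ : ℕ → Subgroup Γ} (hanti : Antitone Δ)
    (htriv : ∀ γ : Γ, (∀ n, γ ∈ Δ n) → γ = 1) {F : Set Γ} (hF : F.Finite) :
    ∀ᶠ n in atTop, F.InjOn (Quotient.mk (rightRel (Δ n))) := by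
  refine (eventually_all_finite hF).2 fun a _ => (eventually_all_finite hF).2 fun b _ => ?_
  by_cases hab : a = b
  · exact Eventually.of_forall fun _ _ => hab
  obtain ⟨N, hN⟩ : ∃ N, b * a⁻¹ ∉ Δ N := by
    by_contra! h
    exact hab (mul_inv_eq_one.1 (htriv _ h)).symm
  filter_upwards [eventually_ge_atTop N] with n hn h
  exact absurd (hanti hn (rightRel_apply.1 (Quotient.exact h))) hN

def cosetConstGridMaps (Δ : Subgroup Γ) (k : ℕ) : Set (Γ → unitInterval) :=
  {x | (∀ δ, x δ ∈ gridPoints k) ∧ ∀ δ η : Γ, δ * η⁻¹ ∈ Δ → x δ = x η}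

theorem apply_eq_of_mem_cosetConstGridMaps {x : Γ → unitInterval}
    (hx : x ∈ cosetConstGridMaps Δ k) {a b : Γ}
    (h : Quotient.mk (rightRel Δ) a = Quotient.mk _ b) : x a = x b :=
  (hx.2 b a (rightRel_apply.1 (Quotient.exact h))).symm

theorem shift_mem_cosetConstGridMaps {x : Γ → unitInterval} (hx : x ∈ cosetConstGridMaps Δ k)
    (γ : Γ) : (fun δ => x (δ * γ)) ∈ cosetConstGridMaps Δ k :=
  ⟨fun δ => hx.1 _, fun δ η h => hx.2 _ _ (by rwa [mul_inv_rev, mul_assoc, mul_inv_cancel_left])⟩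

theorem finite_cosetConstGridMaps (Δ : Subgroup Γ) [Δ.FiniteIndex] (k : ℕ) :
    (cosetConstGridMaps Δ k).Finite := by
  refine Finite.of_injOn (f := fun x (q : Quotient (rightRel Δ)) => x q.out)
    (t := {g | ∀ q, g q ∈ gridPoints k}) (fun x hx q => hx.1 _) (fun x hx y hy hxy => ?_)
    (Finite.pi' fun _ => finite_gridPoints k)
  funext γ
  rw [← apply_eq_of_mem_cosetConstGridMaps hx (Quotient.out_eq _),
    ← apply_eq_of_mem_cosetConstGridMaps hy (Quotient.out_eq _)]
  exact congrFun hxy _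

noncomputable def quantizeOnReps (k : ℕ) (σ : Quotient (rightRel Δ) → Γ)
    (x : Γ → unitInterval) : Γ → unitInterval :=
  fun γ => quantize k (x (σ (Quotient.mk _ γ)))

variable {σ : Quotient (rightRel Δ) → Γ}

theorem measurable_quantizeOnReps : Measurable (quantizeOnReps k σ) :=
  measurable_pi_lambda _ fun _ => (measurable_quantize k).comp (measurable_pi_apply _)

theorem quantizeOnReps_mem_cosetConstGridMaps (hk : k ≠ 0) (x : Γ → unitInterval) :
    quantizeOnReps k σ x ∈ cosetConstGridMaps Δ k := by
  refine ⟨fun γ => quantize_mem_gridPoints hk _, fun δ η h => ?_⟩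
  simp only [quantizeOnReps, (Quotient.sound (rightRel_apply.2 h)).symm]

theorem quantizeOnReps_preimage_singleton [Δ.FiniteIndex] (hσ : RightInverse σ (Quotient.mk _))
    {x₀ : Γ → unitInterval} (hx₀ : x₀ ∈ cosetConstGridMaps Δ k) :
    quantizeOnReps k σ ⁻¹' {x₀} =
      {x | ∀ γ ∈ (finite_range σ).toFinset, x γ ∈ quantize k ⁻¹' {x₀ γ}} := by
  ext x
  simp only [mem_preimage, mem_singleton_iff, Finite.mem_toFinset, forall_mem_range]
  constructor
  · rintro rfl q
    simp only [quantizeOnReps, hσ q]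
  · intro h
    funext γ
    rw [quantizeOnReps, h, apply_eq_of_mem_cosetConstGridMaps hx₀ (hσ _)]

theorem measure_quantizeOnReps_preimage_singleton {lam : Measure (Γ → unitInterval)}
    (hlam : IsProductLebesgue lam) [Δ.FiniteIndex] (hσ : RightInverse σ (Quotient.mk _))
    {x₀ : Γ → unitInterval} (hx₀ : x₀ ∈ cosetConstGridMaps Δ k) :
    lam (quantizeOnReps k σ ⁻¹' {x₀}) =
      ENNReal.ofReal (1 / k) ^ (finite_range σ).toFinset.card := by
  rw [quantizeOnReps_preimage_singleton hσ hx₀,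
    hlam _ _ fun γ => measurable_quantize k (measurableSet_singleton _), ← Finset.prod_const]
  refine Finset.prod_congr rfl fun γ _ => ?_
  obtain ⟨i, hi, hxi⟩ := hx₀.1 γ
  exact volume_image_preimage_quantize hi hxi

theorem map_quantizeOnReps_eq_uniformOn [Countable Γ] {lam : Measure (Γ → unitInterval)}
    [IsProbabilityMeasure lam] (hlam : IsProductLebesgue lam) [Δ.FiniteIndex] (hk : k ≠ 0)
    (hσ : RightInverse σ (Quotient.mk _)) :
    lam.map (quantizeOnReps k σ) = uniformOn (cosetConstGridMaps Δ k) := by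
  have hS : Measurable (quantizeOnReps k σ) := measurable_quantizeOnReps
  have := Measure.isProbabilityMeasure_map (μ := lam) hS.aemeasurable
  have hfin := finite_cosetConstGridMaps Δ k
  refine eq_uniformOn_of_measure_singleton_eq
    (c := ENNReal.ofReal (1 / k) ^ (finite_range σ).toFinset.card) hfin ?_ fun x₀ hx₀ => ?_
  · rw [Measure.map_apply hS hfin.measurableSet.compl, preimage_compl,
      eq_univ_of_forall (s := quantizeOnReps k σ ⁻¹' _) (quantizeOnReps_mem_cosetConstGridMaps hk),
      compl_univ, measure_empty]
  · rw [Measure.map_apply hS (measurableSet_singleton _),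
      measure_quantizeOnReps_preimage_singleton hlam hσ hx₀]

theorem tendsto_integral_uniformOn_cosetConstGridMaps [Countable Γ]
    {lam : Measure (Γ → unitInterval)} [IsProbabilityMeasure lam] (hlam : IsProductLebesgue lam)
    {Δ : ℕ → Subgroup Γ} (hanti : Antitone Δ) (hfi : ∀ n, (Δ n).FiniteIndex)
    (htriv : ∀ γ : Γ, (∀ n, γ ∈ Δ n) → γ = 1) (f : BoundedContinuousFunction (Γ → unitInterval) ℝ) :
    Tendsto (fun p : ℕ × ℕ => ∫ x, f x ∂uniformOn (cosetConstGridMaps (Δ p.2) p.1))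
      (atTop ×ˢ atTop) (𝓝 (∫ x, f x ∂lam)) := by
  rw [Metric.tendsto_nhds]
  intro ε hε
  obtain ⟨F, δ, hF, hδ, hf⟩ := exists_finite_modulus_of_uniformContinuous
    (CompactSpace.uniformContinuous_of_continuous f.continuous) (half_pos hε)
  have hk : ∀ᶠ k : ℕ in atTop, k ≠ 0 ∧ ∀ i ∈ F, 1 / (k : ℝ) < δ i :=
    (eventually_ne_atTop 0).and <| (eventually_all_finite hF).2 fun i hi =>
      tendsto_one_div_atTop_nhds_zero_nat.eventually (gt_mem_nhds (hδ i hi))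
  filter_upwards [hk.prod_mk (eventually_injOn_mk_rightRel hanti htriv hF)]
    with ⟨k, n⟩ ⟨⟨hk0, hkδ⟩, hsep⟩
  obtain ⟨σ, hσ, hσF⟩ := hsep.exists_rightInverse_leftInvOn Quotient.mk_surjective
  have := hfi n
  have hS : Measurable (quantizeOnReps k σ) := measurable_quantizeOnReps
  rw [← map_quantizeOnReps_eq_uniformOn hlam hk0 hσ,
    integral_map hS.aemeasurable f.continuous.aestronglyMeasurable]
  refine (dist_integral_le_of_forall_dist_le ((f.integrable _).comp_measurable hS)
    (f.integrable lam) fun x => (hf _ _ fun i hi => ?_).le).trans_lt (half_lt_self hε)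
  rw [quantizeOnReps, hσF hi]
  exact (dist_quantize_le hk0 _).trans_lt (hkδ i hi)

end CosetConstGridMaps

/-- If `Γ` is residually finite, witnessed by a decreasing sequence
`(Δ_n)` of finite-index subgroups with trivial intersection, then for `k, n ≥ 1`
the set `P(k, n)` of maps `Γ → {0, 1/k, …, (k−1)/k}` constant on right cosets of
`Δ_n` is finite and shift-invariant, and the uniform measures on `P(k, n)`
converge weak-* to the product Lebesgue measure `λ^Γ` as `k, n → ∞`. -/
theorem uniform_measures_on_coset_constant_maps_tendsto_product_lebesgue
    {Γ : Type*} [Group Γ] [Countable Γ]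
    (lam : Measure (Γ → unitInterval)) (hP : IsProbabilityMeasure lam)
    (hcyl : ∀ (F : Finset Γ) (A : Γ → Set unitInterval),
      (∀ γ, MeasurableSet (A γ)) →
      lam {x | ∀ γ ∈ F, x γ ∈ A γ} = ∏ γ ∈ F, volume (Subtype.val '' A γ))
    (Δ : ℕ → Subgroup Γ) (hanti : Antitone Δ) (hfi : ∀ n, (Δ n).FiniteIndex)
    (htriv : ∀ γ : Γ, (∀ n, γ ∈ Δ n) → γ = 1)
    (P : ℕ → ℕ → Set (Γ → unitInterval))
    (hPdef : ∀ k n, P k n =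
      {x | (∀ δ : Γ, ∃ i : ℕ, i < k ∧ (x δ : ℝ) = i / k) ∧
        ∀ δ η : Γ, δ * η⁻¹ ∈ Δ n → x δ = x η}) :
    (∀ k n, 0 < k → (P k n).Finite) ∧
    (∀ k n (γ : Γ) (x : Γ → unitInterval), x ∈ P k n →
      (fun δ : Γ => x (δ * γ)) ∈ P k n) ∧
    (∀ f : BoundedContinuousFunction (Γ → unitInterval) ℝ,
      Tendsto (fun p : ℕ × ℕ => ∫ x, f x ∂(uniformOn (P p.1 p.2)))
        (atTop ×ˢ atTop) (𝓝 (∫ x, f x ∂lam))) := by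
  obtain rfl : P = fun k n => cosetConstGridMaps (Δ n) k := funext fun k => funext (hPdef k)
  exact ⟨fun k n _ => finite_cosetConstGridMaps (Δ n) k,
    fun k n γ x hx => shift_mem_cosetConstGridMaps hx γ,
    tendsto_integral_uniformOn_cosetConstGridMaps hcyl hanti hfi htriv⟩
end

section
/- Let X be a Polish space and (K, d) a compact metric space. Then the map f ↦ f_* from (Borel functions X → K, uniform metric) to maps Prob(X) → Prob(K) with the uniform metric induced by a metrization Δ^K of the weak-* topology on Prob(K) is continuous. -/
open MeasureTheory

lemma aux_integrable {X K : Type*} [MeasurableSpace X]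
    [MetricSpace K] [CompactSpace K] [MeasurableSpace K] [BorelSpace K]
    (ξ : C(K,ℝ)) (hbd : ∀ y, |ξ y| ≤ 1) (f : X → K) (hf : Measurable f)
    (μ : Measure X) [IsFiniteMeasure μ] :
    Integrable (fun x => ξ (f x)) μ := by
  apply (integrable_const (1:ℝ)).mono'
    ((ξ.continuous.measurable.comp hf).aestronglyMeasurable)
  exact Filter.Eventually.of_forall fun x => by simpa [Real.norm_eq_abs] using hbd (f x)

lemma aux_abs_integral {X K : Type*} [MeasurableSpace X]
    [MetricSpace K] [CompactSpace K] [MeasurableSpace K] [BorelSpace K]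
    (ξ : C(K,ℝ)) (hbd : ∀ y, |ξ y| ≤ 1) (f g : X → K) (hf : Measurable f)
    (hg : Measurable g) (μ : Measure X) [IsProbabilityMeasure μ]
    {C : ℝ} (hC : ∀ x, |ξ (f x) - ξ (g x)| ≤ C) :
    |(∫ x, ξ (f x) ∂μ) - ∫ x, ξ (g x) ∂μ| ≤ C := by
  rw [← integral_sub (aux_integrable ξ hbd f hf μ) (aux_integrable ξ hbd g hg μ)]
  calc |∫ x, (ξ (f x) - ξ (g x)) ∂μ| ≤ C * (μ Set.univ).toReal := by
        rw [← Real.norm_eq_abs]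
        apply norm_integral_le_of_norm_le_const
        exact Filter.Eventually.of_forall fun x => by simpa [Real.norm_eq_abs] using hC x
    _ = C := by simp

lemma aux_exists_unif {K : Type*} [MetricSpace K] [CompactSpace K]
    (ξ : ℕ → C(K,ℝ)) (N : ℕ) (ε : ℝ) (hε : 0 < ε) :
    ∃ δ > (0:ℝ), ∀ n < N, ∀ y y' : K, dist y y' < δ → |ξ n y - ξ n y'| ≤ ε := by
  induction N with
  | zero => exact ⟨1, one_pos, fun n hn => absurd hn (Nat.not_lt_zero n)⟩
  | succ N ih =>
    obtain ⟨δ, hδ, h⟩ := ih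
    have hu := CompactSpace.uniformContinuous_of_continuous (ξ N).continuous
    rw [Metric.uniformContinuous_iff] at hu
    obtain ⟨δ', hδ', h'⟩ := hu ε hε
    refine ⟨min δ δ', lt_min hδ hδ', fun n hn y y' hd => ?_⟩
    rcases Nat.lt_succ_iff_lt_or_eq.mp hn with hn | rfl
    · exact h n hn y y' (hd.trans_le (min_le_left _ _))
    · have := h' (hd.trans_le (min_le_right _ _))
      rw [Real.dist_eq] at this
      exact this.le

/-- For a Polish space `X` and a compact metric space `K`, the map
`f ↦ f_*` is continuous from Borel maps `X → K` with the uniform metric to maps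
`Prob(X) → Prob(K)` with the uniform metric induced by the metrization
`Δ^K(μ,ν) = ∑_n 2^{-(n+1)} |∫ ξ_n dμ − ∫ ξ_n dν|` of the weak-* topology, where
`ξ_n : K → [−1,1]` are continuous and their real multiples are dense in `C(K)`. -/
theorem pushforward_map_continuous_uniform
    {X K : Type*} [TopologicalSpace X] [PolishSpace X]
    [MeasurableSpace X] [BorelSpace X]
    [MetricSpace K] [CompactSpace K] [MeasurableSpace K] [BorelSpace K]
    (ξ : ℕ → C(K, ℝ)) (hbd : ∀ n y, |ξ n y| ≤ 1)
    (hdense : ∀ (η : C(K, ℝ)) (ε : ℝ), 0 < ε → ∃ (a : ℝ) (n : ℕ),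
      dist (a • ξ n) η < ε)
    (f : X → K) (hf : Measurable f) :
    ∀ ε > (0 : ℝ), ∃ δ > (0 : ℝ), ∀ g : X → K, Measurable g →
      (∀ x, dist (f x) (g x) < δ) →
      ∀ μ : Measure X, IsProbabilityMeasure μ →
        (∑' n : ℕ, |(∫ x, ξ n (f x) ∂μ) - ∫ x, ξ n (g x) ∂μ| / 2 ^ (n + 1)) ≤ ε := by
  intro ε hε
  -- choose N with (1/2)^N < ε/4
  obtain ⟨N, hN⟩ := exists_pow_lt_of_lt_one (show (0:ℝ) < ε/4 by linarith)
    (show (1:ℝ)/2 < 1 by norm_num)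
  obtain ⟨δ, hδ, hunif⟩ := aux_exists_unif ξ N (ε/2) (by linarith)
  refine ⟨δ, hδ, fun g hg hfg μ hμ => ?_⟩
  set a : ℕ → ℝ := fun n => |(∫ x, ξ n (f x) ∂μ) - ∫ x, ξ n (g x) ∂μ| with ha
  have ha2 : ∀ n, a n ≤ 2 := by
    intro n
    apply aux_abs_integral (ξ n) (hbd n) f g hf hg μ
    intro x
    calc |ξ n (f x) - ξ n (g x)| ≤ |ξ n (f x)| + |ξ n (g x)| := abs_sub _ _
      _ ≤ 2 := by have := hbd n (f x); have := hbd n (g x); linarith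
  have hasmall : ∀ n < N, a n ≤ ε/2 := by
    intro n hn
    apply aux_abs_integral (ξ n) (hbd n) f g hf hg μ
    intro x
    exact hunif n hn (f x) (g x) (hfg x)
  have ha0 : ∀ n, 0 ≤ a n := fun n => abs_nonneg _
  have hterm : ∀ n, a n / 2 ^ (n+1) ≤ 2 * (1/2:ℝ)^(n+1) := by
    intro n
    rw [div_le_iff₀ (by positivity)]
    have : (1/2:ℝ)^(n+1) * 2^(n+1) = 1 := by
      rw [one_div, inv_pow, inv_mul_cancel₀ (by positivity)]
    calc a n ≤ 2 := ha2 n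
      _ = 2 * ((1/2:ℝ)^(n+1) * 2^(n+1)) := by rw [this]; ring
      _ = 2 * (1/2:ℝ)^(n+1) * 2^(n+1) := by ring
  have hgeo : Summable (fun n : ℕ => (1/2:ℝ)^n) :=
    summable_geometric_of_lt_one (by norm_num) (by norm_num)
  have hgeo1 : Summable (fun n : ℕ => 2 * (1/2:ℝ)^(n+1)) := by
    exact ((hgeo.mul_left 2).comp_injective (add_left_injective 1))
  have hsum : Summable (fun n => a n / 2 ^ (n+1)) := by
    apply Summable.of_nonneg_of_le (fun n => by positivity) hterm hgeo1
  rw [← Summable.sum_add_tsum_nat_add N hsum]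
  have h1 : ∑ n ∈ Finset.range N, a n / 2 ^ (n+1) ≤ ε/2 := by
    have hb : ∀ n ∈ Finset.range N, a n / 2 ^ (n+1) ≤ (ε/2) * (1/2:ℝ)^(n+1) := by
      intro n hn
      rw [div_le_iff₀ (by positivity)]
      have h12 : (1/2:ℝ)^(n+1) * 2^(n+1) = 1 := by
        rw [one_div, inv_pow, inv_mul_cancel₀ (by positivity)]
      calc a n ≤ ε/2 := hasmall n (Finset.mem_range.mp hn)
        _ = (ε/2) * ((1/2:ℝ)^(n+1) * 2^(n+1)) := by rw [h12]; ring
        _ = (ε/2) * (1/2:ℝ)^(n+1) * 2^(n+1) := by ring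
    calc ∑ n ∈ Finset.range N, a n / 2 ^ (n+1)
        ≤ ∑ n ∈ Finset.range N, (ε/2) * (1/2:ℝ)^(n+1) := Finset.sum_le_sum hb
      _ ≤ ∑' n : ℕ, (ε/2) * (1/2:ℝ)^(n+1) := by
          apply Summable.sum_le_tsum _ (fun n _ => by positivity)
          exact ((hgeo.mul_left (ε/2)).comp_injective (add_left_injective 1))
      _ = (ε/2) * ((1/2) * ∑' n : ℕ, (1/2:ℝ)^n) := by
          rw [tsum_mul_left]
          congr 1
          rw [← tsum_mul_left]
          congr 1 with n
          rw [pow_succ]; ring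
      _ ≤ ε/2 := by
          rw [tsum_geometric_of_lt_one (by norm_num) (by norm_num)]
          norm_num
  have h2 : ∑' n : ℕ, a (n + N) / 2 ^ (n + N + 1) ≤ ε/2 := by
    have hb : ∀ n : ℕ, a (n + N) / 2 ^ (n + N + 1) ≤ 2 * (1/2:ℝ)^(n + N + 1) := fun n => hterm (n + N)
    calc ∑' n : ℕ, a (n + N) / 2 ^ (n + N + 1)
        ≤ ∑' n : ℕ, 2 * (1/2:ℝ)^(n + N + 1) := by
          apply Summable.tsum_le_tsum hb ((hsum.comp_injective (add_left_injective N)))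
          exact ((hgeo.mul_left 2).comp_injective (add_left_injective (N+1)) : Summable fun n => 2 * (1/2:ℝ)^(n + (N+1)))
      _ = 2 * (1/2:ℝ)^(N+1) * ∑' n : ℕ, (1/2:ℝ)^n := by
          rw [← tsum_mul_left]
          congr 1 with n
          rw [show n + N + 1 = N + 1 + n by ring, pow_add]
          ring
      _ = 2 * (1/2:ℝ)^N := by
          rw [tsum_geometric_of_lt_one (by norm_num) (by norm_num), pow_succ]
          ring
      _ ≤ ε/2 := by linarith
  linarith
end

section
/- Let X be a zero-dimensional Polish space, (K, d) a compact metric space, and μ a Borel probability measure on X. Then the continuous maps X → K are dense in the space of Borel maps X → K with respect to the pseudometric d_μ(f,g) = ∫ d(f(x), g(x)) dμ(x). -/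
/-!
A Borel map `f` into a compact metric space is uniformly `ε/2`-close to a simple map `φ` (snap
`f x` to the nearest point of a finite `ε/2`-net), so it suffices to find a continuous `g` with
`μ {g ≠ φ}` small: then `d_μ(f, g) ≤ ε/2 + diam K · μ {g ≠ φ}`. Each fiber of `φ` lies between a
compact and an open set of almost the same measure (finite measures on Polish spaces are regular),
and in a space with a clopen basis a clopen set fits in between. Off the small set where the fibers
and their clopen approximations disagree, `φ x` is read off continuously from which of the finitely
many clopen sets contain `x`.
-/

open MeasureTheory Set TopologicalSpace Metric
open scoped ENNReal symmDiff

theorem TopologicalSpace.IsTopologicalBasis.exists_isClopen_between_of_isCompact {X : Type*}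
    [TopologicalSpace X] {b : Set (Set X)} (hb : IsTopologicalBasis b)
    (hbc : ∀ s ∈ b, IsClopen s) {Z U : Set X} (hZ : IsCompact Z) (hU : IsOpen U) (hZU : Z ⊆ U) :
    ∃ C, IsClopen C ∧ Z ⊆ C ∧ C ⊆ U := by
  let V : {s // s ∈ b ∧ s ⊆ U} → Set X := Subtype.val
  have hcover : Z ⊆ ⋃ s, V s := fun z hz ↦ by
    obtain ⟨s, hsb, hzs, hsU⟩ := hb.exists_subset_of_mem_open (hZU hz) hU
    exact mem_iUnion.2 ⟨⟨s, hsb, hsU⟩, hzs⟩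
  obtain ⟨t, ht⟩ := hZ.elim_finite_subcover V (fun s ↦ (hbc _ s.2.1).isOpen) hcover
  exact ⟨⋃ s ∈ t, V s, isClopen_biUnion_finset fun s _ ↦ hbc _ s.2.1, ht,
    iUnion₂_subset fun s _ ↦ s.2.2⟩

theorem TopologicalSpace.IsTopologicalBasis.exists_isClopen_measure_symmDiff_lt {X : Type*}
    [TopologicalSpace X] [MeasurableSpace X] [OpensMeasurableSpace X] [T2Space X]
    {b : Set (Set X)} (hb : IsTopologicalBasis b) (hbc : ∀ s ∈ b, IsClopen s)
    (μ : Measure X) [μ.OuterRegular] [μ.InnerRegularCompactLTTop]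
    {A : Set X} (hA : MeasurableSet A) (hμA : μ A ≠ ∞) {δ : ℝ≥0∞} (hδ : δ ≠ 0) :
    ∃ C, IsClopen C ∧ μ (A ∆ C) < δ := by
  have hδ2 : δ / 2 ≠ 0 := ENNReal.div_ne_zero.2 ⟨hδ, ENNReal.ofNat_ne_top⟩
  obtain ⟨Z, hZA, hZ, hAZ⟩ := hA.exists_isCompact_sdiff_lt hμA hδ2
  obtain ⟨U, hAU, hU, -, hUA⟩ := hA.exists_isOpen_sdiff_lt hμA hδ2
  obtain ⟨C, hC, hZC, hCU⟩ := hb.exists_isClopen_between_of_isCompact hbc hZ hU (hZA.trans hAU)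
  have hsub : A ∆ C ⊆ (U \ A) ∪ (A \ Z) := by
    rintro x (⟨hxA, hxC⟩ | ⟨hxC, hxA⟩)
    · exact .inr ⟨hxA, fun hxZ ↦ hxC (hZC hxZ)⟩
    · exact .inl ⟨hCU hxC, hxA⟩
  refine ⟨C, hC, ?_⟩
  calc μ (A ∆ C) ≤ μ (U \ A) + μ (A \ Z) := (measure_mono hsub).trans (measure_union_le _ _)
    _ < δ / 2 + δ / 2 := ENNReal.add_lt_add hUA hAZ
    _ = δ := ENNReal.add_halves δ

namespace MeasureTheory.SimpleFunc

theorem exists_dist_lt_of_compactSpace {K : Type*} [PseudoMetricSpace K] [CompactSpace K]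
    [MeasurableSpace K] [OpensMeasurableSpace K] [Nonempty K] {ε : ℝ} (hε : 0 < ε) :
    ∃ ψ : SimpleFunc K K, ∀ y, dist y (ψ y) < ε := by
  let e := denseSeq K
  have hcover : univ ⊆ ⋃ k, ball (e k) ε := fun y _ ↦ by
    obtain ⟨k, hk⟩ := (denseRange_denseSeq K).exists_dist_lt y hε
    exact mem_iUnion.2 ⟨k, mem_ball.2 (dist_comm y _ ▸ hk)⟩
  obtain ⟨t, ht⟩ := isCompact_univ.elim_finite_subcover _ (fun _ ↦ isOpen_ball) hcover
  refine ⟨nearestPt e (t.sup id), fun y ↦ ?_⟩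
  obtain ⟨k, hk, hyk⟩ := mem_iUnion₂.1 (ht (mem_univ y))
  have hkN : k ≤ t.sup id := t.le_sup (f := id) hk
  have hle : dist (nearestPt e (t.sup id) y) y ≤ dist (e k) y := by
    simpa only [edist_dist, ENNReal.ofReal_le_ofReal_iff dist_nonneg] using
      edist_nearestPt_le e y hkN
  exact (dist_comm y _).trans_lt (hle.trans_lt (mem_ball'.1 hyk))

theorem exists_continuous_measure_ne_le {X β : Type*} [TopologicalSpace X] [MeasurableSpace X]
    (μ : Measure X) (happrox : ∀ A, MeasurableSet A → ∀ δ ≠ 0, ∃ C, IsClopen C ∧ μ (A ∆ C) < δ)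
    [TopologicalSpace β] [Nonempty β] (φ : SimpleFunc X β) {δ : ℝ≥0∞} (hδ : δ ≠ 0) :
    ∃ g : X → β, Continuous g ∧ μ {x | g x ≠ φ x} ≤ δ := by
  classical
  set s := φ.range
  have hδs : δ / s.card ≠ 0 := ENNReal.div_ne_zero.2 ⟨hδ, ENNReal.natCast_ne_top _⟩
  choose C hC hCμ using fun y ↦ happrox _ (φ.measurableSet_fiber y) _ hδs
  let pattern : X → s → Bool := fun x y ↦ (C y).boolIndicator x
  have hpattern : Continuous pattern :=
    continuous_pi fun y ↦ (continuous_boolIndicator_iff_isClopen _).2 (hC y)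
  let decode : (s → Bool) → β := fun p ↦
    if h : ∃ y, p y then (h.choose : β) else Classical.arbitrary β
  refine ⟨decode ∘ pattern, continuous_of_discreteTopology.comp hpattern, ?_⟩
  let E := ⋃ y ∈ s, (φ ⁻¹' {y}) ∆ C y
  have hE : {x | decode (pattern x) ≠ φ x} ⊆ E := by
    intro x hx
    by_contra hxE
    have hmem : ∀ y : s, pattern x y ↔ φ x = y := fun y ↦ by
      have hy : x ∉ (φ ⁻¹' {(y : β)}) ∆ C y := fun h ↦ hxE (mem_biUnion y.2 h)
      have hiff : x ∈ C y ↔ φ x = y := by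
        simp only [mem_symmDiff, mem_preimage, mem_singleton_iff] at hy
        tauto
      simpa [pattern, ← mem_iff_boolIndicator] using hiff
    have hex : ∃ y, pattern x y := ⟨⟨φ x, φ.mem_range_self x⟩, (hmem _).2 rfl⟩
    exact hx (by simp only [decode, dif_pos hex]; exact ((hmem _).1 hex.choose_spec).symm)
  calc μ {x | decode (pattern x) ≠ φ x} ≤ μ E := measure_mono hE
    _ ≤ ∑ y ∈ s, μ ((φ ⁻¹' {y}) ∆ C y) := measure_biUnion_finset_le s _
    _ ≤ ∑ _y ∈ s, δ / s.card := Finset.sum_le_sum fun y _ ↦ (hCμ y).le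
    _ ≤ δ := by simpa [Finset.sum_const, nsmul_eq_mul] using ENNReal.mul_div_le

end MeasureTheory.SimpleFunc

theorem MeasureTheory.integral_le_of_le_const_add_indicator {X : Type*} [MeasurableSpace X]
    {μ : Measure X} [IsFiniteMeasure μ] {u : X → ℝ} (hu : Integrable u μ) {E : Set X}
    (hE : MeasurableSet E) {c D : ℝ} (h : ∀ x, u x ≤ c + E.indicator (fun _ ↦ D) x) :
    ∫ x, u x ∂μ ≤ c * μ.real univ + D * μ.real E := by
  have hind : Integrable (E.indicator fun _ ↦ D) μ := (integrable_const D).indicator hE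
  calc ∫ x, u x ∂μ ≤ ∫ x, (c + E.indicator (fun _ ↦ D) x) ∂μ :=
        integral_mono hu ((integrable_const c).add hind) h
    _ = c * μ.real univ + D * μ.real E := by
        rw [integral_add (integrable_const c) hind, integral_const, integral_indicator_const _ hE,
          smul_eq_mul, smul_eq_mul, mul_comm, mul_comm (μ.real E)]

/-- For a zero-dimensional Polish space `X`, a compact metric space `K`,
and a Borel probability measure `μ` on `X`, the continuous maps `X → K` are dense in
the Borel maps `X → K` for the pseudometric `d_μ(f,g) = ∫ d(f x, g x) dμ`. -/
theorem continuous_dense_in_borel_maps_zero_dimensional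
    {X K : Type*} [TopologicalSpace X] [PolishSpace X]
    [MeasurableSpace X] [BorelSpace X]
    (hzero : ∃ b : Set (Set X), TopologicalSpace.IsTopologicalBasis b ∧
      ∀ s ∈ b, IsClopen s)
    (μ : Measure X) [IsProbabilityMeasure μ]
    [MetricSpace K] [CompactSpace K] [MeasurableSpace K] [BorelSpace K]
    (f : X → K) (hf : Measurable f) :
    ∀ ε > (0 : ℝ), ∃ g : X → K, Continuous g ∧ (∫ x, dist (f x) (g x) ∂μ) < ε := by
  intro ε hε
  obtain ⟨b, hb, hbc⟩ := hzero
  have := nonempty_of_isProbabilityMeasure μ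
  have : Nonempty K := ⟨f (Classical.arbitrary X)⟩
  obtain ⟨ψ, hψ⟩ := SimpleFunc.exists_dist_lt_of_compactSpace (K := K) (half_pos hε)
  let φ := ψ.comp f hf
  set D := diam (univ : Set K)
  have hdist_le (y z : K) : dist y z ≤ D :=
    dist_le_diam_of_mem isCompact_univ.isBounded (mem_univ _) (mem_univ _)
  have hδ : 0 < ε / 2 / (D + 1) := by positivity
  obtain ⟨g, hg, hgφ⟩ := φ.exists_continuous_measure_ne_le μ
    (fun A hA _ hδ ↦ hb.exists_isClopen_measure_symmDiff_lt hbc μ hA (measure_ne_top μ A) hδ)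
    (ENNReal.ofReal_pos.2 hδ).ne'
  refine ⟨g, hg, ?_⟩
  let E := {x | g x ≠ φ x}
  have hE : MeasurableSet E := (measurableSet_eq_fun hg.measurable φ.measurable).compl
  have hint : Integrable (fun x ↦ dist (f x) (g x)) μ :=
    .of_bound (hf.dist hg.measurable).aestronglyMeasurable D
      (.of_forall fun x ↦ by simpa [abs_of_nonneg dist_nonneg] using hdist_le _ _)
  have hbound (x : X) : dist (f x) (g x) ≤ ε / 2 + E.indicator (fun _ ↦ D) x := by
    by_cases hx : x ∈ E
    · rw [indicator_of_mem hx]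
      linarith [hdist_le (f x) (g x)]
    · rw [indicator_of_notMem hx, add_zero, not_not.1 hx]
      exact (hψ (f x)).le
  calc ∫ x, dist (f x) (g x) ∂μ ≤ ε / 2 * μ.real univ + D * μ.real E :=
        integral_le_of_le_const_add_indicator hint hE hbound
    _ ≤ ε / 2 + D * (ε / 2 / (D + 1)) := by
        rw [probReal_univ, mul_one]
        gcongr
        exact ENNReal.toReal_le_of_le_ofReal hδ.le hgφ
    _ < ε / 2 + (D + 1) * (ε / 2 / (D + 1)) := by gcongr; linarith
    _ = ε := by rw [mul_div_cancel₀ _ (by positivity)]; ring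
end

section
/- Pointwise ergodic theorem for patterns in the Bernoulli shift: Let Γ be a countable group, k ∈ ℕ⁺, and (D_n) a sequence of nonempty finite subsets of Γ with |D_n|/log n → ∞. Then for every finite S ⊆ Γ and every φ : S → k, for u_k^Γ-almost every c ∈ k^Γ, the fraction |D_n ∩ O_φ(c)|/|D_n| converges to k^{−|S|} as n → ∞. -/
/-!
Occurrences of `φ` at positions `δ` whose translates `S δ` are pairwise disjoint are cylinder
conditions on disjoint sets of coordinates, hence independent events of probability
`p = k^{-|S|}`; by Hoeffding's inequality the number of them in `T` deviates from `p |T|` by at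
least `t` with probability at most `2 exp(-2t²/|T|)`. A translate `S δ` meets at most `|S⁻¹ S|`
translates `S δ'`, so a greedy colouring splits each `D_n` into `m = |S⁻¹ S| + 1` such classes,
one of which deviates by at least `ε |D_n| / m` whenever `D_n` deviates by `ε |D_n|`. This has
probability at most `2m exp(-2ε²|D_n|/m²)`, which is eventually below `n⁻²` because
`|D_n| / log n → ∞`, and Borel–Cantelli concludes.
-/

open MeasureTheory Filter Topology Finset ProbabilityTheory
open scoped ENNReal Classical Pointwise

theorem ProbabilityTheory.iIndepSet.measureReal_abs_card_sub_sum_ge_le {Ω ι : Type*}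
    [MeasurableSpace Ω] {μ : Measure Ω} [IsProbabilityMeasure μ] [Fintype ι] {A : ι → Set Ω}
    [∀ ω, DecidablePred fun i => ω ∈ A i] (hA : iIndepSet A μ)
    (hmeas : ∀ i, MeasurableSet (A i)) {t : ℝ} (ht : 0 ≤ t) :
    μ.real {ω | t ≤ |(#{i | ω ∈ A i} : ℝ) - ∑ i, μ.real (A i)|}
      ≤ 2 * Real.exp (-2 * t ^ 2 / Fintype.card ι) := by
  set X : ι → Ω → ℝ := fun i ω => (A i).indicator 1 ω - μ.real (A i)
  have hX : iIndepFun X μ :=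
    hA.iIndepFun_indicator.comp (fun i x => x - μ.real (A i)) fun _ => by fun_prop
  have hsubG : ∀ i, HasSubgaussianMGF (X i) (1 / 4) μ := fun i => by
    convert hasSubgaussianMGF_of_mem_Icc (μ := μ) (X := (A i).indicator 1) (a := 0) (b := 1)
      (measurable_const.indicator (hmeas i)).aemeasurable
      (ae_of_all _ fun ω => by by_cases h : ω ∈ A i <;> simp [h]) using 1
    · simp [X, integral_indicator_one (hmeas i)]
    · ext; norm_num
  have hsum : ∀ ω, ∑ i, X i ω = (#{i | ω ∈ A i} : ℝ) - ∑ i, μ.real (A i) := fun ω => by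
    simp [X, sum_sub_distrib, Set.indicator_apply, sum_boole]
  have hexp : -t ^ 2 / (2 * ((∑ _i : ι, (1 / 4 : NNReal) : NNReal) : ℝ))
      = -2 * t ^ 2 / Fintype.card ι := by
    push_cast
    simp only [one_div, sum_const, card_univ, nsmul_eq_mul, neg_mul]
    ring
  have hupper := HasSubgaussianMGF.measure_sum_ge_le_of_iIndepFun hX (s := univ)
    (fun i _ => hsubG i) ht
  have hlower := HasSubgaussianMGF.measure_sum_ge_le_of_iIndepFun
    (hX.comp (fun _ x => -x) fun _ => by fun_prop) (s := univ) (fun i _ => (hsubG i).neg) ht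
  simp only [hexp, Function.comp_apply, sum_neg_distrib, hsum] at hupper hlower
  calc μ.real {ω | t ≤ |(#{i | ω ∈ A i} : ℝ) - ∑ i, μ.real (A i)|}
      ≤ μ.real ({ω | t ≤ (#{i | ω ∈ A i} : ℝ) - ∑ i, μ.real (A i)}
          ∪ {ω | t ≤ -((#{i | ω ∈ A i} : ℝ) - ∑ i, μ.real (A i))}) :=
        measureReal_mono fun _ hω => le_abs.1 (Set.mem_ofPred.1 hω)
    _ ≤ _ := (measureReal_union_le _ _).trans (by linarith)

lemma ae_eventually_notMem_of_summable_measureReal {Ω : Type*} [MeasurableSpace Ω]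
    {μ : Measure Ω} [IsFiniteMeasure μ] {s : ℕ → Set Ω} (hs : Summable fun n => μ.real (s n)) :
    ∀ᵐ ω ∂μ, ∀ᶠ n in atTop, ω ∉ s n := by
  refine ae_eventually_notMem ?_
  have : ∀ n, μ (s n) = ENNReal.ofReal (μ.real (s n)) := fun _ => (ofReal_measureReal).symm
  rw [tsum_congr this, ← ENNReal.ofReal_tsum_of_nonneg (fun _ => measureReal_nonneg) hs]
  exact ENNReal.ofReal_ne_top

lemma ae_tendsto_of_forall_ae_eventually_abs_sub_lt {Ω ι : Type*} [MeasurableSpace Ω]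
    {μ : Measure Ω} {l : Filter ι} {f : ι → Ω → ℝ} {a : ℝ}
    (h : ∀ ε > 0, ∀ᵐ ω ∂μ, ∀ᶠ n in l, |f n ω - a| < ε) :
    ∀ᵐ ω ∂μ, Tendsto (fun n => f n ω) l (𝓝 a) := by
  filter_upwards [ae_all_iff.2 fun j : ℕ => h (1 / (j + 1)) (by positivity)] with ω hω
  refine Metric.tendsto_nhds.2 fun ε hε => ?_
  obtain ⟨j, hj⟩ := exists_nat_one_div_lt hε
  exact (hω j).mono fun n hn => (Real.dist_eq _ _).trans_lt (hn.trans hj)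

lemma summable_exp_neg_mul_of_tendsto_div_log {u : ℕ → ℝ}
    (hu : Tendsto (fun n : ℕ => u n / Real.log n) atTop atTop) {a : ℝ} (ha : 0 < a) :
    Summable fun n => Real.exp (-a * u n) := by
  refine Summable.of_norm_bounded_eventually_nat (Real.summable_nat_pow_inv.2 one_lt_two) ?_
  filter_upwards [hu.eventually_ge_atTop (2 / a), eventually_ge_atTop 2] with n hun hn
  have hlog : 0 < Real.log n := Real.log_pos (by exact_mod_cast hn)
  rw [div_le_div_iff₀ ha hlog] at hun
  rw [Real.norm_of_nonneg (Real.exp_pos _).le, ← Real.exp_log (by positivity : (0 : ℝ) < n ^ 2),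
    ← Real.exp_neg, Real.exp_le_exp, Real.log_pow]
  push_cast
  linarith

theorem SimpleGraph.exists_coloring_of_card_neighbors_lt {α : Type*} [DecidableEq α]
    (G : SimpleGraph α) {m : ℕ} (N : α → Finset α) (hN : ∀ a b, G.Adj a b → b ∈ N a)
    (hNm : ∀ a, #(N a) < m) (T : Finset α) :
    ∃ f : α → Fin m, ∀ a ∈ T, ∀ b ∈ T, G.Adj a b → f a ≠ f b := by
  induction T using Finset.induction with
  | empty => exact ⟨fun a => ⟨0, (Nat.zero_le _).trans_lt (hNm a)⟩, by simp⟩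
  | @insert a T haT ih =>
    obtain ⟨f, hf⟩ := ih
    obtain ⟨j, -, hj⟩ := exists_mem_notMem_of_card_lt_card
      (card_image_le.trans_lt ((hNm a).trans_eq (card_fin m).symm) : #((N a).image f) < #univ)
    have hfresh : ∀ b ∈ T, G.Adj a b → Function.update f a j b ≠ j := fun b hb hab => by
      rw [Function.update_of_ne (ne_of_mem_of_not_mem hb haT)]
      exact fun hfb => hj (hfb ▸ mem_image_of_mem f (hN a b hab))
    refine ⟨Function.update f a j, fun x hx y hy hxy => ?_⟩
    rcases mem_insert.1 hx with rfl | hxT <;> rcases mem_insert.1 hy with rfl | hyT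
    · exact (G.irrefl hxy).elim
    · simpa using (hfresh y hyT hxy).symm
    · simpa using hfresh x hxT hxy.symm
    · rw [Function.update_of_ne (ne_of_mem_of_not_mem hxT haT),
        Function.update_of_ne (ne_of_mem_of_not_mem hyT haT)]
      exact hf x hxT y hyT hxy

section

variable {Γ α : Type*} [Group Γ]

lemma mem_image_mul_of_not_disjoint {S : Finset Γ} {δ δ' : Γ}
    (h : ¬Disjoint (S.image (· * δ)) (S.image (· * δ'))) : δ' ∈ (S⁻¹ * S).image (· * δ) := by
  obtain ⟨_, hγ, hγ'⟩ := Finset.not_disjoint_iff.1 h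
  obtain ⟨s, hs, rfl⟩ := mem_image.1 hγ
  obtain ⟨s', hs', hss'⟩ := mem_image.1 hγ'
  refine mem_image.2 ⟨s'⁻¹ * s, mul_mem_mul (inv_mem_inv hs') hs, ?_⟩
  simp only [mul_assoc, ← hss', inv_mul_cancel_left]

lemma exists_pairwiseDisjoint_translates_partition (S T : Finset Γ) :
    ∃ f : Γ → Fin (#(S⁻¹ * S) + 1), ∀ j,
      (({δ ∈ T | f δ = j} : Finset Γ) : Set Γ).PairwiseDisjoint fun δ => S.image (· * δ) := by
  let G := SimpleGraph.fromRel fun δ δ' : Γ => ¬Disjoint (S.image (· * δ)) (S.image (· * δ'))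
  have hN : ∀ δ δ', G.Adj δ δ' → δ' ∈ (S⁻¹ * S).image (· * δ) := by
    rintro δ δ' ⟨-, h | h⟩
    · exact mem_image_mul_of_not_disjoint h
    · exact mem_image_mul_of_not_disjoint (disjoint_comm.not.1 h)
  obtain ⟨f, hf⟩ := G.exists_coloring_of_card_neighbors_lt _ hN
    (fun _ => Nat.lt_succ_of_le card_image_le) T
  refine ⟨f, fun j δ hδ δ' hδ' hne => ?_⟩
  simp only [coe_filter, Set.mem_ofPred_eq] at hδ hδ'
  by_contra h
  exact hf δ hδ.1 δ' hδ'.1 ⟨hne, Or.inl h⟩ (hδ.2.trans hδ'.2.symm)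

lemma injOn_mul_of_pairwiseDisjoint {S T : Finset Γ}
    (hT : (T : Set Γ).PairwiseDisjoint fun δ => S.image (· * δ)) :
    Set.InjOn (fun p : Γ × Γ => p.1 * p.2) (S ×ˢ T : Finset (Γ × Γ)) := by
  rintro ⟨s, δ⟩ hsδ ⟨s', δ'⟩ hsδ' (h : s * δ = s' * δ')
  simp only [coe_product, Set.mem_prod, mem_coe] at hsδ hsδ'
  obtain rfl : δ = δ' := by
    by_contra hne
    exact Finset.disjoint_left.1 (hT hsδ.2 hsδ'.2 hne) (mem_image_of_mem _ hsδ.1)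
      (h ▸ mem_image_of_mem _ hsδ'.1)
  simp [mul_right_cancel h]

-- `c ∈ occursAt S φ δ` means `δ ∈ O_φ(c)`.
def occursAt (S : Finset Γ) (φ : Γ → α) (δ : Γ) : Set (Γ → α) :=
  {c | ∀ s ∈ S, c (s * δ) = φ s}

-- Definitionally the instance of the unfolded predicate, so that counts
-- `#{δ ∈ T | c ∈ occursAt S φ δ}` agree with the `filter` of the main theorem
-- (a classical instance would not).
instance [DecidableEq α] {S : Finset Γ} {φ : Γ → α} {δ : Γ} (c : Γ → α) :
    Decidable (c ∈ occursAt S φ δ) :=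
  inferInstanceAs (Decidable (∀ s ∈ S, c (s * δ) = φ s))

lemma measurableSet_occursAt [MeasurableSpace α] [MeasurableSingletonClass α]
    (S : Finset Γ) (φ : Γ → α) (δ : Γ) : MeasurableSet (occursAt S φ δ) := by
  simp only [occursAt, Set.ofPred_forall]
  exact .biInter S.countable_toSet fun s _ => measurable_pi_apply _ (measurableSet_singleton _)

lemma biInter_occursAt_eq_cylinder {S T : Finset Γ} (φ : Γ → α)
    (hT : (T : Set Γ).PairwiseDisjoint fun δ => S.image (· * δ)) :
    ∃ ψ : Γ → α, ⋂ δ ∈ T, occursAt S φ δ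
      = {c | ∀ γ ∈ (S ×ˢ T).image (fun p : Γ × Γ => p.1 * p.2), c γ = ψ γ} := by
  let g := Function.invFunOn (fun p : Γ × Γ => p.1 * p.2) (S ×ˢ T : Finset _)
  have hg : ∀ s ∈ S, ∀ δ ∈ T, g (s * δ) = (s, δ) := fun s hs δ hδ =>
    (injOn_mul_of_pairwiseDisjoint hT).leftInvOn_invFunOn (x := (s, δ)) (by simp [hs, hδ])
  refine ⟨fun γ => φ (g γ).1, ?_⟩
  ext c
  simp only [Set.mem_iInter, occursAt, Set.mem_ofPred_eq, mem_image, mem_product, Prod.exists]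
  constructor
  · rintro hc _ ⟨s, δ, ⟨hs, hδ⟩, rfl⟩
    rw [hg s hs δ hδ]
    exact hc δ hδ s hs
  · intro hc δ hδ s hs
    rw [hc _ ⟨s, δ, ⟨hs, hδ⟩, rfl⟩, hg s hs δ hδ]

-- The product `u_k^Γ` of uniform measures, through its values on cylinder sets.
def IsUniformBernoulli {k : ℕ} (μ : Measure (Γ → Fin k)) : Prop :=
  ∀ (F : Finset Γ) (ψ : Γ → Fin k), μ {c | ∀ γ ∈ F, c γ = ψ γ} = ((k : ℝ≥0∞) ^ F.card)⁻¹

namespace IsUniformBernoulli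

variable {k : ℕ} {μ : Measure (Γ → Fin k)}

lemma measure_biInter_occursAt (hμ : IsUniformBernoulli μ) {S T : Finset Γ} (φ : Γ → Fin k)
    (hT : (T : Set Γ).PairwiseDisjoint fun δ => S.image (· * δ)) :
    μ (⋂ δ ∈ T, occursAt S φ δ) = ((k : ℝ≥0∞) ^ #S)⁻¹ ^ #T := by
  obtain ⟨ψ, hψ⟩ := biInter_occursAt_eq_cylinder φ hT
  rw [hψ, hμ, card_image_of_injOn (injOn_mul_of_pairwiseDisjoint hT), card_product, pow_mul,
    ENNReal.inv_pow]

lemma measure_occursAt (hμ : IsUniformBernoulli μ) (S : Finset Γ) (φ : Γ → Fin k) (δ : Γ) :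
    μ (occursAt S φ δ) = ((k : ℝ≥0∞) ^ #S)⁻¹ := by
  simpa using hμ.measure_biInter_occursAt φ (T := {δ}) (by simp)

lemma measureReal_occursAt (hμ : IsUniformBernoulli μ) (S : Finset Γ) (φ : Γ → Fin k) (δ : Γ) :
    μ.real (occursAt S φ δ) = ((k : ℝ) ^ #S)⁻¹ := by
  simp [measureReal_def, hμ.measure_occursAt]

lemma iIndepSet_occursAt (hμ : IsUniformBernoulli μ) {S T : Finset Γ} (φ : Γ → Fin k)
    (hT : (T : Set Γ).PairwiseDisjoint fun δ => S.image (· * δ)) :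
    iIndepSet (fun δ : T => occursAt S φ δ) μ := by
  refine (iIndepSet_iff_meas_biInter fun _ => measurableSet_occursAt _ _ _).2 fun s => ?_
  have hs : ((s.image Subtype.val : Finset Γ) : Set Γ).PairwiseDisjoint
      fun δ => S.image (· * δ) := hT.subset (by simp +contextual [Set.subset_def])
  rw [← set_biInter_finset_image, hμ.measure_biInter_occursAt φ hs,
    card_image_of_injective _ Subtype.val_injective]
  simp [hμ.measure_occursAt]

variable [IsProbabilityMeasure μ]

lemma measureReal_abs_card_occursAt_sub_ge_le (hμ : IsUniformBernoulli μ) {S T : Finset Γ}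
    (φ : Γ → Fin k) (hT : (T : Set Γ).PairwiseDisjoint fun δ => S.image (· * δ)) {t : ℝ}
    (ht : 0 ≤ t) :
    μ.real {c | t ≤ |(#{δ ∈ T | c ∈ occursAt S φ δ} : ℝ) - ((k : ℝ) ^ #S)⁻¹ * #T|}
      ≤ 2 * Real.exp (-2 * t ^ 2 / #T) := by
  have hcount : ∀ c : Γ → Fin k,
      #{δ : T | c ∈ occursAt S φ δ} = #{δ ∈ T | c ∈ occursAt S φ δ} := fun c => by
    rw [card_filter, card_filter, sum_coe_sort T fun δ => if c ∈ occursAt S φ δ then 1 else 0]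
  simpa only [hcount, hμ.measureReal_occursAt, sum_const, card_univ, Fintype.card_coe,
    nsmul_eq_mul, mul_comm] using (hμ.iIndepSet_occursAt φ hT).measureReal_abs_card_sub_sum_ge_le
      (fun _ => measurableSet_occursAt _ _ _) ht

lemma measureReal_abs_card_occursAt_sub_ge_le_of_subset (hμ : IsUniformBernoulli μ)
    {S T D : Finset Γ} (φ : Γ → Fin k)
    (hT : (T : Set Γ).PairwiseDisjoint fun δ => S.image (· * δ)) (hTD : T ⊆ D) {t : ℝ}
    (ht : 0 < t) :
    μ.real {c | t ≤ |(#{δ ∈ T | c ∈ occursAt S φ δ} : ℝ) - ((k : ℝ) ^ #S)⁻¹ * #T|}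
      ≤ 2 * Real.exp (-2 * t ^ 2 / #D) := by
  rcases T.eq_empty_or_nonempty with rfl | hTne
  · simp [not_le.2 ht, Real.exp_nonneg]
  refine (hμ.measureReal_abs_card_occursAt_sub_ge_le φ hT ht.le).trans ?_
  gcongr 2 * Real.exp ?_
  rw [neg_mul, neg_div, neg_div, neg_le_neg_iff]
  exact div_le_div_of_nonneg_left (by positivity) (by simpa using hTne) (mod_cast card_le_card hTD)

lemma measureReal_abs_card_occursAt_sub_ge_mul_card_le (hμ : IsUniformBernoulli μ)
    (S : Finset Γ) (φ : Γ → Fin k) {D : Finset Γ} (hD : D.Nonempty) {ε : ℝ} (hε : 0 < ε) :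
    μ.real {c | ε * #D ≤ |(#{δ ∈ D | c ∈ occursAt S φ δ} : ℝ) - ((k : ℝ) ^ #S)⁻¹ * #D|}
      ≤ 2 * (#(S⁻¹ * S) + 1) * Real.exp (-2 * ε ^ 2 * #D / (#(S⁻¹ * S) + 1) ^ 2) := by
  set m : ℕ := #(S⁻¹ * S) + 1
  obtain ⟨f, hf⟩ := exists_pairwiseDisjoint_translates_partition S D
  set C : Fin m → Finset Γ := fun j => {δ ∈ D | f δ = j}
  set dev : Finset Γ → (Γ → Fin k) → ℝ :=
    fun T c => (#{δ ∈ T | c ∈ occursAt S φ δ} : ℝ) - ((k : ℝ) ^ #S)⁻¹ * #T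
  have hdev : ∀ c, dev D c = ∑ j, dev (C j) c := fun c => by
    have hD := card_eq_sum_card_fiberwise (s := D) (t := univ) (f := f) fun _ _ => mem_univ _
    have hocc := card_eq_sum_card_fiberwise (s := {δ ∈ D | c ∈ occursAt S φ δ}) (t := univ)
      (f := f) fun _ _ => mem_univ _
    simp only [dev, C, sum_sub_distrib, ← mul_sum, hD, hocc, filter_comm]
    push_cast
    rfl
  have hsub : {c | ε * #D ≤ |dev D c|} ⊆ ⋃ j, {c | ε * #D / m ≤ |dev (C j) c|} := by
    intro c hc
    have : ∑ _j : Fin m, ε * #D / m ≤ ∑ j, |dev (C j) c| := by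
      rw [sum_const, card_univ, Fintype.card_fin, nsmul_eq_mul, mul_div_cancel₀ _ (by positivity)]
      exact hc.trans ((congrArg abs (hdev c)).trans_le (abs_sum_le_sum_abs _ _))
    simpa using exists_le_of_sum_le univ_nonempty this
  have ht : 0 < ε * #D / m := by have := card_pos.2 hD; positivity
  calc μ.real {c | ε * #D ≤ |dev D c|}
      ≤ ∑ j, μ.real {c | ε * #D / m ≤ |dev (C j) c|} :=
        (measureReal_mono hsub).trans (measureReal_iUnion_fintype_le _)
    _ ≤ ∑ _j : Fin m, 2 * Real.exp (-2 * (ε * #D / m) ^ 2 / #D) := by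
        gcongr with j
        exact hμ.measureReal_abs_card_occursAt_sub_ge_le_of_subset φ (hf j) (filter_subset _ _) ht
    _ = _ := by
        have : (#D : ℝ) ≠ 0 := by simpa using hD.ne_empty
        rw [sum_const, card_univ, Fintype.card_fin, nsmul_eq_mul]
        push_cast [m]
        field_simp

lemma ae_eventually_abs_card_occursAt_div_sub_lt (hμ : IsUniformBernoulli μ) (S : Finset Γ)
    (φ : Γ → Fin k) {D : ℕ → Finset Γ}
    (hD : Tendsto (fun n : ℕ => (#(D n) : ℝ) / Real.log n) atTop atTop) {ε : ℝ} (hε : 0 < ε) :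
    ∀ᵐ c ∂μ, ∀ᶠ n in atTop,
      |(#{δ ∈ D n | c ∈ occursAt S φ δ} : ℝ) / #(D n) - ((k : ℝ) ^ #S)⁻¹| < ε := by
  have hne : ∀ᶠ n in atTop, (D n).Nonempty := (hD.eventually_gt_atTop 0).mono fun n hn =>
    card_pos.1 (Nat.pos_of_ne_zero fun h => by simp [h] at hn)
  have hsum : Summable fun n => μ.real {c | ε * #(D n)
      ≤ |(#{δ ∈ D n | c ∈ occursAt S φ δ} : ℝ) - ((k : ℝ) ^ #S)⁻¹ * #(D n)|} := by
    refine Summable.of_norm_bounded_eventually_nat ((summable_exp_neg_mul_of_tendsto_div_log hD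
      (a := 2 * ε ^ 2 / (#(S⁻¹ * S) + 1) ^ 2) (by positivity)).mul_left
        (2 * ((#(S⁻¹ * S) : ℝ) + 1))) ?_
    filter_upwards [hne] with n hn
    rw [Real.norm_of_nonneg measureReal_nonneg]
    refine (hμ.measureReal_abs_card_occursAt_sub_ge_mul_card_le S φ hn hε).trans_eq ?_
    congr 2
    ring
  filter_upwards [ae_eventually_notMem_of_summable_measureReal hsum] with c hc
  filter_upwards [hc, hne] with n hn hDn
  have hpos : (0 : ℝ) < #(D n) := by simpa using hDn
  rw [not_le] at hn
  rw [div_sub' hpos.ne', abs_div, abs_of_pos hpos, div_lt_iff₀ hpos]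
  simpa [mul_comm] using hn

end IsUniformBernoulli

end

theorem pointwise_ergodic_patterns_bernoulli_general
    {Γ : Type*} [Group Γ] (k : ℕ)
    (μ : Measure (Γ → Fin k)) [IsProbabilityMeasure μ]
    (hcyl : ∀ (F : Finset Γ) (ψ : Γ → Fin k),
      μ {c | ∀ γ ∈ F, c γ = ψ γ} = ((k : ℝ≥0∞) ^ F.card)⁻¹)
    (D : ℕ → Finset Γ)
    (hgrowth : Tendsto (fun n : ℕ => ((D n).card : ℝ) / Real.log n) atTop atTop)
    (S : Finset Γ) (φ : Γ → Fin k) :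
    ∀ᵐ c ∂μ, Tendsto
      (fun n => (((D n).filter fun δ => ∀ s ∈ S, c (s * δ) = φ s).card : ℝ)
        / ((D n).card : ℝ))
      atTop (𝓝 (((k : ℝ) ^ S.card)⁻¹)) :=
  ae_tendsto_of_forall_ae_eventually_abs_sub_lt fun _ hε =>
    IsUniformBernoulli.ae_eventually_abs_card_occursAt_div_sub_lt hcyl S φ hgrowth hε

/-- Pointwise ergodic theorem for patterns in the Bernoulli shift.
Let `μ = u_k^Γ` be the product of uniform measures on `k^Γ` (characterized by its
values on cylinders), and let `(D_n)` be nonempty finite subsets of `Γ` with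
`|D_n|/log n → ∞`. Then for every finite `S ⊆ Γ` and every `φ : S → k`, for
`μ`-a.e. `c`, the fraction of occurrences `|D_n ∩ O_φ(c)|/|D_n|` tends to
`k^{−|S|}`. -/
theorem pointwise_ergodic_patterns_bernoulli
    {Γ : Type*} [Group Γ] [Countable Γ] (k : ℕ) (hk : 0 < k)
    (μ : Measure (Γ → Fin k)) [IsProbabilityMeasure μ]
    (hcyl : ∀ (F : Finset Γ) (ψ : Γ → Fin k),
      μ {c | ∀ γ ∈ F, c γ = ψ γ} = ((k : ℝ≥0∞) ^ F.card)⁻¹)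
    (D : ℕ → Finset Γ) (hne : ∀ n, (D n).Nonempty)
    (hgrowth : Tendsto (fun n : ℕ => ((D n).card : ℝ) / Real.log n) atTop atTop)
    (S : Finset Γ) (φ : Γ → Fin k) :
    ∀ᵐ c ∂μ, Tendsto
      (fun n => (((D n).filter fun δ => ∀ s ∈ S, c (s * δ) = φ s).card : ℝ)
        / ((D n).card : ℝ))
      atTop (𝓝 (((k : ℝ) ^ S.card)⁻¹)) :=
  pointwise_ergodic_patterns_bernoulli_general k μ hcyl D hgrowth S φ
end

section
/- Symmetric Lovász Local Lemma over an infinite set: Let k ∈ ℕ⁺ and let B be a collection of bad k-events over a set X (each bad event B is a nonempty set of functions φ : F → k for some common finite F = dom(B) ⊆ X, with probability P[B] = |B|/k^{|F|}). If e · sup_{B ∈ B} P[B] · (sup_{B ∈ B} deg_B(B) + 1) < 1, where deg_B(B) is the number of other events whose domain intersects dom(B), then there exists a function f : X → k avoiding every bad event, i.e., no φ ∈ B ∈ B satisfies φ ⊆ f. -/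
set_option maxHeartbeats 1000000

open Finset
open scoped Classical

/-- A bad `k`-event over a set `X`: a nonempty set of colorings determined by a
finite domain `dom ⊆ X` (an event is identified with the set of total colorings
`X → k` extending some bad partial coloring of its domain). -/
structure BadEvent (X : Type*) (k : ℕ) where
  dom : Finset X
  bad : Set (X → Fin k)
  nonempty : bad.Nonempty
  determined : ∀ c c' : X → Fin k, (∀ y ∈ dom, c y = c' y) → (c ∈ bad ↔ c' ∈ bad)

/-- The probability `P[B] = |B| / k^{|dom B|}` of a bad event: the proportion of
colorings of its domain that are bad. -/
noncomputable def BadEvent.prob {X : Type*} {k : ℕ} (E : BadEvent X k) : ℝ :=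
  ((Finset.univ.filter fun φ : (E.dom → Fin k) =>
      ∃ c : X → Fin k, c ∈ E.bad ∧ ∀ y : E.dom, c y = φ y).card : ℝ)
    / k ^ E.dom.card

/-- The neighborhood of `E` in an instance `ℬ`: the other events of `ℬ` whose
domain meets the domain of `E`. -/
def BadEvent.nbhd {X : Type*} {k : ℕ} (ℬ : Set (BadEvent X k)) (E : BadEvent X k) :
    Set (BadEvent X k) :=
  {E' ∈ ℬ | E' ≠ E ∧ (E'.dom ∩ E.dom).Nonempty}

/-!
Take the product of uniform measures on `X → Fin k`. A bad event is the cylinder over its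
domain of its bad patterns, so its measure is its probability, and events whose domains are
disjoint are independent. For a finite family, the Erdős–Lovász induction shows that, with
`D = ⌊d⌋` and `x = 1 / (D + 2)`, avoiding a set `S` of events has probability at least
`(1 - x) ^ |S| > 0`: each further event has conditional probability at most `x` given that the
others are avoided. Bad events are open in the compact space `X → Fin k`, so the finite
intersection property gives a coloring avoiding all of them.
-/

open MeasureTheory ProbabilityTheory

section LocalLemma

variable {Ω ι : Type*} {A : ι → Set Ω}

def noneOf (A : ι → Set Ω) (S : Finset ι) : Set Ω := ⋂ i ∈ S, (A i)ᶜ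

@[simp] lemma noneOf_empty : noneOf A ∅ = Set.univ := by simp [noneOf]

lemma noneOf_insert [DecidableEq ι] (i : ι) (S : Finset ι) :
    noneOf A (insert i S) = noneOf A S \ A i := by
  ext ω
  simp [noneOf, and_comm]

lemma noneOf_anti {S T : Finset ι} (h : S ⊆ T) : noneOf A T ⊆ noneOf A S :=
  Set.biInter_subset_biInter_left (coe_subset.2 h)

variable [MeasurableSpace Ω] {μ : Measure Ω} {x : ℝ}

lemma one_sub_mul_le_measureReal_noneOf_insert [IsFiniteMeasure μ] [DecidableEq ι] {i : ι}
    {S : Finset ι} (hA : MeasurableSet (A i))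
    (h : μ.real (A i ∩ noneOf A S) ≤ x * μ.real (noneOf A S)) :
    (1 - x) * μ.real (noneOf A S) ≤ μ.real (noneOf A (insert i S)) := by
  rw [noneOf_insert]
  rw [Set.inter_comm] at h
  linarith [measureReal_inter_add_sdiff (μ := μ) (s := noneOf A S) hA]

lemma pow_card_mul_le_measureReal_noneOf_union [IsFiniteMeasure μ] [DecidableEq ι]
    (hA : ∀ i, MeasurableSet (A i)) (hx : x ≤ 1) (T U : Finset ι)
    (h : ∀ i ∈ U, ∀ V ⊆ U, i ∉ V →
      μ.real (A i ∩ noneOf A (T ∪ V)) ≤ x * μ.real (noneOf A (T ∪ V))) :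
    (1 - x) ^ #U * μ.real (noneOf A T) ≤ μ.real (noneOf A (T ∪ U)) := by
  induction U using Finset.induction_on with
  | empty => simp
  | insert a U haU ih =>
    have hU := ih fun i hi V hV => h i (mem_insert_of_mem hi) V (hV.trans (subset_insert _ _))
    have ha := h a (mem_insert_self _ _) U (subset_insert _ _) haU
    calc (1 - x) ^ #(insert a U) * μ.real (noneOf A T)
        = (1 - x) * ((1 - x) ^ #U * μ.real (noneOf A T)) := by
          rw [card_insert_of_notMem haU]; ring
      _ ≤ (1 - x) * μ.real (noneOf A (T ∪ U)) := by gcongr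
      _ ≤ μ.real (noneOf A (T ∪ insert a U)) := by
          rw [union_insert]; exact one_sub_mul_le_measureReal_noneOf_insert (hA a) ha

/-- Split `S` into the neighbours `S₁` of `i` and the rest `S₂`. Then `A i` is independent of
avoiding `S₂`, and adding back the events of `S₁` one at a time costs a factor `1 - x` each,
by the induction hypothesis applied to the intermediate families. -/
theorem measureReal_inter_noneOf_le [IsFiniteMeasure μ] (hA : ∀ i, MeasurableSet (A i))
    {𝒜 : Finset ι} {N : ι → Set ι} {D : ℕ} (hx0 : 0 ≤ x) (hx1 : x ≤ 1)
    (hdeg : ∀ i ∈ 𝒜, (N i).encard ≤ D)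
    (hind : ∀ i ∈ 𝒜, ∀ T ⊆ 𝒜, i ∉ T → (∀ j ∈ T, j ∉ N i) →
      μ.real (A i ∩ noneOf A T) ≤ μ.real (A i) * μ.real (noneOf A T))
    (hprob : ∀ i ∈ 𝒜, μ.real (A i) ≤ x * (1 - x) ^ D) :
    ∀ S ⊆ 𝒜, ∀ i ∈ 𝒜, i ∉ S → μ.real (A i ∩ noneOf A S) ≤ x * μ.real (noneOf A S) := by
  classical
  intro S
  induction S using Finset.strongInduction with
  | H S ih =>
  intro hS i hi hiS
  set S₁ := S.filter (· ∈ N i)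
  set S₂ := S.filter (· ∉ N i)
  have hS₂ : S₂ ⊆ S := filter_subset _ _
  have hcard : #S₁ ≤ D := by
    have h := (Set.encard_le_encard (s := (S₁ : Set ι)) (t := N i)
      fun j hj => (mem_filter.1 hj).2).trans (hdeg i hi)
    rwa [Set.encard_coe_eq_coe_finsetCard, Nat.cast_le] at h
  have hpeel : (1 - x) ^ #S₁ * μ.real (noneOf A S₂) ≤ μ.real (noneOf A S) := by
    have hS₁₂ : S₂ ∪ S₁ = S := by rw [union_comm]; exact filter_union_filter_not_eq _ S
    rw [← hS₁₂]
    refine pow_card_mul_le_measureReal_noneOf_union hA hx1 S₂ S₁ fun j hj V hV hjV => ?_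
    have hjS : j ∈ S := (mem_filter.1 hj).1
    have hj₂ : j ∉ S₂ := fun h => (mem_filter.1 h).2 (mem_filter.1 hj).2
    have hsub : S₂ ∪ V ⊆ S := union_subset hS₂ (hV.trans (filter_subset _ _))
    refine ih _ ((ssubset_iff_of_subset hsub).2 ⟨j, hjS, ?_⟩) (hsub.trans hS) j (hS hjS) ?_ <;>
      simp [hj₂, hjV]
  calc μ.real (A i ∩ noneOf A S)
      ≤ μ.real (A i ∩ noneOf A S₂) :=
        measureReal_mono (Set.inter_subset_inter_right _ (noneOf_anti hS₂))
    _ ≤ μ.real (A i) * μ.real (noneOf A S₂) :=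
        hind i hi S₂ (hS₂.trans hS) (fun h => hiS (hS₂ h)) fun j hj => (mem_filter.1 hj).2
    _ ≤ x * (1 - x) ^ D * μ.real (noneOf A S₂) := by gcongr; exact hprob i hi
    _ ≤ x * ((1 - x) ^ #S₁ * μ.real (noneOf A S₂)) := by
        rw [mul_assoc]
        gcongr x * (?_ * _)
        exact pow_le_pow_of_le_one (by linarith) (by linarith) hcard
    _ ≤ x * μ.real (noneOf A S) := by gcongr

theorem pow_card_le_measureReal_noneOf [IsProbabilityMeasure μ] (hA : ∀ i, MeasurableSet (A i))
    {𝒜 : Finset ι} {N : ι → Set ι} {D : ℕ} (hx0 : 0 ≤ x) (hx1 : x ≤ 1)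
    (hdeg : ∀ i ∈ 𝒜, (N i).encard ≤ D)
    (hind : ∀ i ∈ 𝒜, ∀ T ⊆ 𝒜, i ∉ T → (∀ j ∈ T, j ∉ N i) →
      μ.real (A i ∩ noneOf A T) ≤ μ.real (A i) * μ.real (noneOf A T))
    (hprob : ∀ i ∈ 𝒜, μ.real (A i) ≤ x * (1 - x) ^ D) :
    (1 - x) ^ #𝒜 ≤ μ.real (noneOf A 𝒜) := by
  classical
  have := pow_card_mul_le_measureReal_noneOf_union hA hx1 ∅ 𝒜 fun i hi V hV hiV => by
    rw [empty_union]
    exact measureReal_inter_noneOf_le hA hx0 hx1 hdeg hind hprob V hV i hi hiV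
  rwa [noneOf_empty, probReal_univ, mul_one, empty_union] at this

end LocalLemma

lemma indep_cylinderEvents_infinitePi {ι : Type*} {X : ι → Type*} [∀ i, MeasurableSpace (X i)]
    (μ : ∀ i, Measure (X i)) [∀ i, IsProbabilityMeasure (μ i)] {I J : Set ι}
    (hIJ : Disjoint I J) :
    Indep (cylinderEvents I) (cylinderEvents J) (Measure.infinitePi μ) :=
  indep_iSup_of_disjoint (fun i => (measurable_pi_apply i).comap_le)
    (iIndepFun_infinitePi (X := fun _ => id) fun _ => measurable_id) hIJ

namespace BadEvent

variable {X : Type*} {k : ℕ}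

noncomputable def patterns (E : BadEvent X k) : Finset (E.dom → Fin k) :=
  univ.filter fun φ => ∃ c : X → Fin k, c ∈ E.bad ∧ ∀ y : E.dom, c y = φ y

lemma prob_eq (E : BadEvent X k) : E.prob = #E.patterns / (k : ℝ) ^ #E.dom := rfl

lemma bad_eq_cylinder (E : BadEvent X k) :
    E.bad = cylinder E.dom (E.patterns : Set (E.dom → Fin k)) := by
  ext f
  simp only [cylinder, Set.mem_preimage, patterns, coe_filter, mem_univ, true_and,
    Set.mem_ofPred_eq, Finset.restrict]
  exact ⟨fun hf => ⟨f, hf, fun _ => rfl⟩,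
    fun ⟨c, hc, hcf⟩ => (E.determined c f fun y hy => hcf ⟨y, hy⟩).1 hc⟩

lemma isOpen_bad (E : BadEvent X k) : IsOpen E.bad := by
  rw [bad_eq_cylinder]
  exact (isOpen_discrete _).preimage (continuous_pi fun y => continuous_apply _)

lemma measurableSet_bad {J : Set X} (E : BadEvent X k) (h : ↑E.dom ⊆ J) :
    MeasurableSet[cylinderEvents J] E.bad := by
  rw [bad_eq_cylinder]
  have hr : Measurable[cylinderEvents J] (E.dom.restrict (π := fun _ : X => Fin k)) :=
    @measurable_pi_lambda _ _ _ (cylinderEvents J) _ _ fun y =>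
      measurable_cylinderEvent_apply (h y.2)
  exact hr .of_discrete

theorem exists_forall_notMem_bad {ℬ : Set (BadEvent X k)}
    (h : ∀ 𝒜 : Finset (BadEvent X k), ↑𝒜 ⊆ ℬ → ∃ f : X → Fin k, ∀ E ∈ 𝒜, f ∉ E.bad) :
    ∃ f : X → Fin k, ∀ E ∈ ℬ, f ∉ E.bad := by
  have hfin (𝒜 : Finset ℬ) : (⋂ E ∈ 𝒜, (E.1.bad)ᶜ).Nonempty := by
    obtain ⟨f, hf⟩ := h (𝒜.map (Function.Embedding.subtype _)) (by simp)
    exact ⟨f, Set.mem_iInter₂.2 fun E hE => hf E.1 (mem_map_of_mem _ hE)⟩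
  obtain ⟨f, hf⟩ :=
    CompactSpace.iInter_nonempty (fun E : ℬ => (isOpen_bad E.1).isClosed_compl) hfin
  exact ⟨f, fun E hE => Set.mem_iInter.1 hf ⟨E, hE⟩⟩

lemma disjoint_dom_of_notMem_nbhd {ℬ : Set (BadEvent X k)} {E E' : BadEvent X k} (hE' : E' ∈ ℬ)
    (hne : E' ≠ E) (h : E' ∉ nbhd ℬ E) : Disjoint E'.dom E.dom := by
  rw [Finset.disjoint_iff_inter_eq_empty, ← Finset.not_nonempty_iff_eq_empty]
  exact fun hmeet => h ⟨hE', hne, hmeet⟩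

noncomputable def uniformColoring (X : Type*) (k : ℕ) : Measure (X → Fin k) :=
  Measure.infinitePi fun _ => uniformOn Set.univ

variable [NeZero k]

instance : IsProbabilityMeasure (uniformColoring X k) := by
  unfold uniformColoring; infer_instance

lemma measureReal_bad (E : BadEvent X k) : (uniformColoring X k).real E.bad = E.prob := by
  rw [measureReal_def, bad_eq_cylinder, uniformColoring, Measure.infinitePi_cylinder _ .of_discrete,
    ← uniformOn_pi, Set.pi_univ, uniformOn_univ, Measure.count_apply_finset, ENNReal.toReal_div,
    ENNReal.toReal_natCast, ENNReal.toReal_natCast, Fintype.card_fun, Fintype.card_fin,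
    Fintype.card_coe, prob_eq, Nat.cast_pow]

lemma measureReal_bad_inter {J : Set X} (E : BadEvent X k) (hJ : Disjoint (E.dom : Set X) J)
    {t : Set (X → Fin k)} (ht : MeasurableSet[cylinderEvents J] t) :
    (uniformColoring X k).real (E.bad ∩ t) =
      (uniformColoring X k).real E.bad * (uniformColoring X k).real t := by
  have hindep := indep_cylinderEvents_infinitePi (fun _ => uniformOn (Set.univ : Set (Fin k))) hJ
  simp only [measureReal_def, uniformColoring,
    (Indep_iff _ _ _).1 hindep _ _ (E.measurableSet_bad le_rfl) ht, ENNReal.toReal_mul]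

theorem exists_forall_notMem_bad_of_finset {ℬ : Set (BadEvent X k)} {𝒜 : Finset (BadEvent X k)}
    (h𝒜 : ↑𝒜 ⊆ ℬ) {x : ℝ} {D : ℕ} (hx0 : 0 ≤ x) (hx1 : x < 1)
    (hdeg : ∀ E ∈ 𝒜, (nbhd ℬ E).encard ≤ D) (hprob : ∀ E ∈ 𝒜, E.prob ≤ x * (1 - x) ^ D) :
    ∃ f : X → Fin k, ∀ E ∈ 𝒜, f ∉ E.bad := by
  have hind (E) (_ : E ∈ 𝒜) (T) (hT : T ⊆ 𝒜) (hET : E ∉ T) (hTN : ∀ E' ∈ T, E' ∉ nbhd ℬ E) :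
      (uniformColoring X k).real (E.bad ∩ noneOf bad T) ≤
        (uniformColoring X k).real E.bad * (uniformColoring X k).real (noneOf bad T) := by
    refine (E.measureReal_bad_inter disjoint_compl_right ?_).le
    refine Finset.measurableSet_biInter T fun E' hE' => (E'.measurableSet_bad ?_).compl
    exact Set.subset_compl_iff_disjoint_right.2 <| Finset.disjoint_coe.2 <|
      disjoint_dom_of_notMem_nbhd (h𝒜 (hT hE')) (ne_of_mem_of_not_mem hE' hET) (hTN E' hE')
  have hpos : 0 < (uniformColoring X k).real (noneOf bad 𝒜) :=
    (pow_pos (by linarith) _).trans_le <| pow_card_le_measureReal_noneOf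
      (fun E => cylinderEvents_le_pi _ (E.measurableSet_bad (J := Set.univ) (Set.subset_univ _)))
      hx0 hx1.le hdeg hind fun E hE => (E.measureReal_bad).trans_le (hprob E hE)
  obtain ⟨f, hf⟩ : (noneOf bad 𝒜).Nonempty :=
    Set.nonempty_iff_ne_empty.2 fun h => by simp [h] at hpos
  exact ⟨f, fun E hE => Set.mem_iInter₂.1 hf E hE⟩

end BadEvent

/-- The choice `x = 1 / (D + 2)` (rather than `1 / (D + 1)`) keeps `x < 1` when `D = 0`;
it works because `(1 + 1 / (D + 1)) ^ (D + 1) ≤ e`. -/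
lemma le_inv_mul_one_sub_inv_pow {p d : ℝ} {D : ℕ} (hD : (D : ℝ) ≤ d)
    (h : Real.exp 1 * p * (d + 1) < 1) :
    p ≤ ((D : ℝ) + 2)⁻¹ * (1 - ((D : ℝ) + 2)⁻¹) ^ D := by
  have h₁ : 1 - ((D : ℝ) + 2)⁻¹ = (D + 1) / (D + 2) := by field_simp; ring
  have h₂ : 1 + ((D : ℝ) + 1)⁻¹ = (D + 2) / (D + 1) := by field_simp; ring
  rw [h₁]
  set y := ((D : ℝ) + 2)⁻¹ * ((D + 1) / (D + 2)) ^ D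
  have hy : 0 ≤ y := by positivity
  have hid : ((D : ℝ) + 1) * y * (1 + ((D : ℝ) + 1)⁻¹) ^ (D + 1) = 1 := by
    rw [h₂, div_pow, pow_succ, pow_succ]
    simp only [y, div_pow]
    field_simp
  have hkey : 1 ≤ Real.exp 1 * ((D : ℝ) + 1) * y :=
    calc 1 = ((D : ℝ) + 1) * y * (1 + ((D : ℝ) + 1)⁻¹) ^ (D + 1) := hid.symm
      _ ≤ ((D : ℝ) + 1) * y * Real.exp 1 :=
        mul_le_mul_of_nonneg_left (by simpa using Real.one_add_inv_pow_le_exp (n := D + 1))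
          (by positivity)
      _ = Real.exp 1 * ((D : ℝ) + 1) * y := by ring
  by_contra! hpy
  nlinarith [Real.exp_pos 1,
    mul_le_mul_of_nonneg_left hD (mul_nonneg (Real.exp_pos 1).le (hy.trans hpy.le))]

/-- Symmetric Lovász Local Lemma over an arbitrary (possibly
infinite) set `X`: if `e · p · (d + 1) < 1` for bounds `p` on the probabilities and
`d` on the degrees of the events of an instance `ℬ`, then some coloring
`f : X → k` avoids every bad event of `ℬ`. -/
theorem symmetric_LLL
    {X : Type*} (k : ℕ) (hk : 0 < k) (ℬ : Set (BadEvent X k)) (p d : ℝ)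
    (hp : ∀ E ∈ ℬ, E.prob ≤ p)
    (hdfin : ∀ E ∈ ℬ, (BadEvent.nbhd ℬ E).Finite)
    (hd : ∀ E ∈ ℬ, ((BadEvent.nbhd ℬ E).ncard : ℝ) ≤ d)
    (hcond : Real.exp 1 * p * (d + 1) < 1) :
    ∃ f : X → Fin k, ∀ E ∈ ℬ, f ∉ E.bad := by
  have : NeZero k := ⟨hk.ne'⟩
  obtain rfl | ⟨E₀, hE₀⟩ := ℬ.eq_empty_or_nonempty
  · exact ⟨fun _ => 0, by simp⟩
  have hD : (⌊d⌋₊ : ℝ) ≤ d := Nat.floor_le ((Nat.cast_nonneg _).trans (hd E₀ hE₀))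
  have hdeg (E) (hE : E ∈ ℬ) : (BadEvent.nbhd ℬ E).encard ≤ ⌊d⌋₊ := by
    rw [← (hdfin E hE).cast_ncard_eq]
    exact_mod_cast Nat.le_floor (hd E hE)
  exact BadEvent.exists_forall_notMem_bad fun 𝒜 h𝒜 =>
    BadEvent.exists_forall_notMem_bad_of_finset h𝒜 (by positivity)
      (inv_lt_one_of_one_lt₀ (by linarith)) (fun E hE => hdeg E (h𝒜 hE))
      fun E hE => (hp E (h𝒜 hE)).trans (le_inv_mul_one_sub_inv_pow hD hcond)
end

section
/- Rokhlin-tower covering lemma: Let h : ℕ → ℕ and ε > 0. There exist N ∈ ℕ and finite intervals D_0, …, D_{N−1} ⊆ ℤ with |D_n| ≥ h(n), such that for every free p.m.p. action ℤ ↷ (X, μ) there is a Borel set A ⊆ X with μ(A) ≤ ε and μ({x ∈ X : D_n·x ⊆ A for some 0 ≤ n < N}) ≥ 1 − ε. -/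
/-!
The heart of the matter is Rokhlin's lemma. Freeness lets countably many measurable sets, each
disjoint from its first `M` translates, cover almost every point; a greedy selection among them
gives a measurable set `B` that is still disjoint from its first `M` translates, so `M μ B ≤ 1`,
and meets almost every orbit. By Poincaré recurrence almost every point has visited `B` in the
past. Cutting each orbit stretch between consecutive visits to `B` into blocks of length `m` yields
a tower of height `m` whose complement consists of the incomplete last blocks, of measure at most
`m μ B`.

For the covering statement take a tower of height `N ℓ` and let `A` be its lowest `2 ℓ` levels,
of measure at most `2 / N`: a point at height `j` of the tower has the whole block of `ℓ` steps
starting at `-(j / ℓ) ℓ` inside `A`.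
-/

open MeasureTheory Finset
open scoped ENNReal Pointwise

section Combinatorics

variable {X : Type*} [AddAction ℤ X]

def DisjointTranslates (m : ℕ) (S : Set X) : Prop :=
  ∀ x ∈ S, ∀ d : ℕ, 0 < d → d < m → (d : ℤ) +ᵥ x ∉ S

theorem DisjointTranslates.pairwiseDisjoint {m : ℕ} {S : Set X} (h : DisjointTranslates m S) :
    (Set.Iio m).PairwiseDisjoint fun i : ℕ => (i : ℤ) +ᵥ S := by
  have hlt : ∀ i j : ℕ, i < j → j < m → Disjoint ((i : ℤ) +ᵥ S) ((j : ℤ) +ᵥ S) := by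
    intro i j hij hjm
    refine Set.disjoint_left.2 fun y hyi hyj => ?_
    rw [Set.mem_vadd_set_iff_neg_vadd_mem] at hyi hyj
    refine h _ hyj (j - i) (by omega) (by omega) ?_
    rwa [vadd_vadd, show ((j - i : ℕ) : ℤ) + -j = -i by omega]
  intro i hi j hj hij
  rcases hij.lt_or_gt with hij | hji
  · exact hlt i j hij hj
  · exact (hlt j i hji hi).symm

def IsLastVisit (B : Set X) (x : X) (d : ℕ) : Prop :=
  -(d : ℤ) +ᵥ x ∈ B ∧ ∀ j < d, -(j : ℤ) +ᵥ x ∉ B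

theorem IsLastVisit.unique {B : Set X} {x : X} {d₁ d₂ : ℕ} (h₁ : IsLastVisit B x d₁)
    (h₂ : IsLastVisit B x d₂) : d₁ = d₂ :=
  le_antisymm (not_lt.1 fun h => h₁.2 _ h h₂.1) (not_lt.1 fun h => h₂.2 _ h h₁.1)

theorem exists_isLastVisit {B : Set X} {x : X} (h : ∃ d : ℕ, -(d : ℤ) +ᵥ x ∈ B) :
    ∃ d, IsLastVisit B x d := by
  classical
  exact ⟨Nat.find h, Nat.find_spec h, fun _ hj => Nat.find_min h hj⟩

/-- The stretch of an orbit between consecutive visits to `B` is cut into blocks of length `m`;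
the base consists of the starting points of the blocks that are not cut short by the next visit. -/
def towerBase (B : Set X) (m : ℕ) : Set X :=
  {x | (∃ d, m ∣ d ∧ IsLastVisit B x d) ∧ ∀ t : ℕ, 0 < t → t < m → (t : ℤ) +ᵥ x ∉ B}

theorem disjointTranslates_towerBase (B : Set X) (m : ℕ) :
    DisjointTranslates m (towerBase B m) := by
  rintro x ⟨⟨dx, hmdx, hx⟩, hnext⟩ d hd hdm ⟨⟨dy, hmdy, hy⟩, -⟩
  have hshift : IsLastVisit B ((d : ℤ) +ᵥ x) (dx + d) := by
    refine ⟨?_, fun j hj => ?_⟩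
    · rw [vadd_vadd, show -((dx + d : ℕ) : ℤ) + d = -dx by omega]
      exact hx.1
    rw [vadd_vadd]
    rcases lt_or_ge j d with hjd | hjd
    · rw [show -(j : ℤ) + d = ((d - j : ℕ) : ℤ) by omega]
      exact hnext _ (by omega) (by omega)
    · rw [show -(j : ℤ) + d = -((j - d : ℕ) : ℤ) by omega]
      exact hx.2 _ (by omega)
  rw [← hshift.unique hy] at hmdy
  have := Nat.eq_zero_of_dvd_of_lt ((Nat.dvd_add_right hmdx).1 hmdy) hdm
  omega

theorem exists_mem_vadd_towerBase_or_vadd_mem {B : Set X} {m : ℕ} {x : X} (hm : 0 < m)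
    (hpast : ∃ d : ℕ, -(d : ℤ) +ᵥ x ∈ B) :
    (∃ i < m, x ∈ (i : ℤ) +ᵥ towerBase B m) ∨ ∃ t : ℕ, 0 < t ∧ t < m ∧ (t : ℤ) +ᵥ x ∈ B := by
  refine or_iff_not_imp_right.2 fun hnext => ?_
  push Not at hnext
  obtain ⟨d, hd⟩ := exists_isLastVisit hpast
  have hdm : m ∣ d - d % m := Nat.dvd_sub_mod d
  have hmod : d % m ≤ d := Nat.mod_le d m
  have hmodm : d % m < m := Nat.mod_lt d hm
  generalize d % m = r at hdm hmod hmodm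
  refine ⟨r, hmodm, Set.mem_vadd_set_iff_neg_vadd_mem.2
    ⟨⟨d - r, hdm, ?_, fun j hj => ?_⟩, fun t ht htm => ?_⟩⟩ <;> rw [vadd_vadd]
  · rw [show -((d - r : ℕ) : ℤ) + -r = -d by omega]
    exact hd.1
  · rw [show -(j : ℤ) + -r = -((j + r : ℕ) : ℤ) by omega]
    exact hd.2 _ (by omega)
  · rcases le_or_gt t r with htr | hrt
    · rw [show (t : ℤ) + -r = -((r - t : ℕ) : ℤ) by omega]
      exact hd.2 _ (by omega)
    · rw [show (t : ℤ) + -r = ((t - r : ℕ) : ℤ) by omega]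
      exact hnext _ (by omega) (by omega)

def greedyUnion (C : ℕ → Set X) (M : ℕ) : Set X :=
  {x | ∃ n, x ∈ C n ∧ ∀ j < n, ∀ k : ℤ, |k| < M → k +ᵥ x ∉ C j}

theorem disjointTranslates_greedyUnion {C : ℕ → Set X} {M : ℕ}
    (hC : ∀ n, DisjointTranslates M (C n)) : DisjointTranslates M (greedyUnion C M) := by
  rintro x ⟨n, hxn, hxfar⟩ d hd hdM ⟨n', hyn', hyfar⟩
  rcases lt_trichotomy n n' with hnn' | rfl | hn'n
  · exact hyfar n hnn' (-d) (by rw [abs_neg, Nat.abs_cast]; omega) (by rwa [neg_vadd_vadd])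
  · exact hC n x hxn d hd hdM hyn'
  · exact hxfar n' hn'n d (by rw [Nat.abs_cast]; omega) hyn'

theorem exists_vadd_mem_greedyUnion {C : ℕ → Set X} (M : ℕ) {n : ℕ} {x : X} (hx : x ∈ C n) :
    ∃ k : ℤ, k +ᵥ x ∈ greedyUnion C M := by
  induction n using Nat.strong_induction_on generalizing x with
  | _ n ih =>
    by_cases hfar : ∀ j < n, ∀ k : ℤ, |k| < M → k +ᵥ x ∉ C j
    · exact ⟨0, by rw [zero_vadd]; exact ⟨n, hx, hfar⟩⟩
    push Not at hfar
    obtain ⟨j, hj, k, -, hk⟩ := hfar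
    obtain ⟨k', hk'⟩ := ih j hj hk
    exact ⟨k' + k, by rwa [add_vadd]⟩

end Combinatorics

theorem exists_seq_measurableSet_separating_finset (X : Type*) [MeasurableSpace X]
    [MeasurableSpace.CountablySeparated X] :
    ∃ A : ℕ → Set X, (∀ n, MeasurableSet (A n)) ∧
      ∀ (x : X) (F : Finset X), x ∉ F → ∃ n, x ∈ A n ∧ ∀ y ∈ F, y ∉ A n := by
  classical
  obtain ⟨S, hSm, hS⟩ := exists_seq_separating X MeasurableSet.empty Set.univ
  obtain ⟨e, he⟩ := exists_surjective_nat (Finset (ℕ × Bool))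
  refine ⟨fun n => {x | ∀ p ∈ e n, (x ∈ S p.1 ↔ p.2 = true)}, fun n => ?_, fun x F hxF => ?_⟩
  · measurability
  have hsep : ∀ y ∈ F, ∃ k, ¬(x ∈ S k ↔ y ∈ S k) := fun y hy => by
    by_contra! h
    exact hxF (hS x trivial y trivial h ▸ hy)
  choose! k hk using hsep
  obtain ⟨n, hn⟩ := he (F.image fun y => (k y, decide (x ∈ S (k y))))
  refine ⟨n, fun p hp => ?_, fun y hy hyA => hk y hy ?_⟩
  · rw [hn, mem_image] at hp
    obtain ⟨y, -, rfl⟩ := hp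
    simp
  · have := hyA _ (hn ▸ mem_image_of_mem _ hy)
    simp only [decide_eq_true_eq] at this
    exact this.symm

section Measure

variable {X : Type*} [MeasurableSpace X] {μ : Measure X}

theorem measure_biUnion_vadd_le {G ι : Type*} [AddGroup G] [AddAction G X]
    [VAddInvariantMeasure G X μ] (s : Finset ι) (g : ι → G) (S : Set X) :
    μ (⋃ i ∈ s, g i +ᵥ S) ≤ #s * μ S :=
  calc μ (⋃ i ∈ s, g i +ᵥ S) ≤ ∑ i ∈ s, μ (g i +ᵥ S) := measure_biUnion_finset_le s _
    _ = #s * μ S := by simp [measure_vadd]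

variable [AddAction ℤ X] [MeasurableConstVAdd ℤ X]

theorem measurableSet_towerBase {B : Set X} (hB : MeasurableSet B) (m : ℕ) :
    MeasurableSet (towerBase B m) := by
  unfold towerBase IsLastVisit
  measurability

theorem exists_seq_cover_disjointTranslates [MeasurableSpace.CountablySeparated X] (M : ℕ) :
    ∃ C : ℕ → Set X, (∀ n, MeasurableSet (C n)) ∧ (∀ n, DisjointTranslates M (C n)) ∧
      ∀ x, (∀ k : ℤ, k ≠ 0 → k +ᵥ x ≠ x) → ∃ n, x ∈ C n := by
  classical
  obtain ⟨A, hAm, hA⟩ := exists_seq_measurableSet_separating_finset X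
  refine ⟨fun n => {x | x ∈ A n ∧ ∀ d : ℕ, 0 < d → d < M → (d : ℤ) +ᵥ x ∉ A n},
    fun n => ?_, ?_, fun x hfree => ?_⟩
  · have := hAm n
    measurability
  · rintro n x ⟨-, hx⟩ d hd hdM ⟨hdx, -⟩
    exact hx d hd hdM hdx
  obtain ⟨n, hxn, hF⟩ := hA x ((Ioo 0 M).image fun d : ℕ => (d : ℤ) +ᵥ x) (by
    simp only [mem_image, mem_Ioo, not_exists, not_and]
    exact fun d hd => hfree d (by omega))
  exact ⟨n, hxn, fun d hd hdM => hF _ (mem_image_of_mem _ (mem_Ioo.2 ⟨hd, hdM⟩))⟩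

theorem exists_measurableSet_disjointTranslates_sweeping [MeasurableSpace.CountablySeparated X]
    (M : ℕ) :
    ∃ B : Set X, MeasurableSet B ∧ DisjointTranslates M B ∧
      ∀ x, (∀ k : ℤ, k ≠ 0 → k +ᵥ x ≠ x) → ∃ k : ℤ, k +ᵥ x ∈ B := by
  obtain ⟨C, hCm, hCdisj, hCcover⟩ := exists_seq_cover_disjointTranslates (X := X) M
  refine ⟨greedyUnion C M, ?_, disjointTranslates_greedyUnion hCdisj, fun x hx => ?_⟩
  · unfold greedyUnion
    measurability
  obtain ⟨n, hxn⟩ := hCcover x hx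
  exact exists_vadd_mem_greedyUnion M hxn

variable [VAddInvariantMeasure ℤ X μ]

theorem DisjointTranslates.natCast_mul_measure_le {m : ℕ} {S : Set X}
    (h : DisjointTranslates m S) (hS : MeasurableSet S) : m * μ S ≤ μ Set.univ := by
  have hdisj : (↑(range m) : Set ℕ).PairwiseDisjoint fun i : ℕ => (i : ℤ) +ᵥ S := by
    rw [coe_range]
    exact h.pairwiseDisjoint
  calc (m : ℝ≥0∞) * μ S = μ (⋃ i ∈ range m, (i : ℤ) +ᵥ S) := by
        rw [measure_biUnion_finset hdisj fun i _ => hS.const_vadd _]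
        simp [measure_vadd]
    _ ≤ μ Set.univ := measure_mono (Set.subset_univ _)

theorem ae_exists_neg_vadd_mem [IsFiniteMeasure μ] {B : Set X} (hB : MeasurableSet B) :
    ∀ᵐ x ∂μ, ∀ k : ℤ, k +ᵥ x ∈ B → ∃ d : ℕ, -(d : ℤ) +ᵥ x ∈ B := by
  have hrec := (measurePreserving_vadd (-1 : ℤ) μ).conservative.ae_mem_imp_frequently_image_mem
    hB.nullMeasurableSet
  refine ae_all_iff.2 fun k => ?_
  filter_upwards [(measurePreserving_vadd k μ).quasiMeasurePreserving.ae hrec] with x hx hkx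
  obtain ⟨n, hn, hnB⟩ := (hx hkx).forall_exists_of_atTop k.toNat
  simp only [vadd_iterate, vadd_vadd] at hnB
  refine ⟨(n - k).toNat, ?_⟩
  rwa [show n • (-1 : ℤ) + k = -((n - k).toNat : ℤ) by simp; omega] at hnB

theorem exists_rokhlin_tower [MeasurableSpace.CountablySeparated X] [IsFiniteMeasure μ]
    (hfree : ∀ᵐ x ∂μ, ∀ k : ℤ, k ≠ 0 → k +ᵥ x ≠ x) {m : ℕ} (hm : 0 < m) {ε : ℝ≥0∞}
    (hε : ε ≠ 0) :
    ∃ R : Set X, MeasurableSet R ∧ DisjointTranslates m R ∧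
      μ (⋃ i ∈ range m, (i : ℤ) +ᵥ R)ᶜ ≤ ε := by
  obtain ⟨M, hM⟩ := ENNReal.exists_nat_mul_gt hε
    (ENNReal.mul_ne_top (ENNReal.natCast_ne_top m) (measure_ne_top μ Set.univ))
  obtain ⟨B, hBm, hBdisj, hBsweep⟩ := exists_measurableSet_disjointTranslates_sweeping (X := X) M
  refine ⟨towerBase B m, measurableSet_towerBase hBm m, disjointTranslates_towerBase B m, ?_⟩
  have hcover : ((⋃ i ∈ range m, (i : ℤ) +ᵥ towerBase B m)ᶜ : Set X) ≤ᵐ[μ]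
      (⋃ t ∈ Ioo 0 m, -(t : ℤ) +ᵥ B : Set X) := by
    filter_upwards [hfree, ae_exists_neg_vadd_mem hBm] with x hxfree hxpast hx
    obtain ⟨k, hk⟩ := hBsweep x hxfree
    rcases exists_mem_vadd_towerBase_or_vadd_mem hm (hxpast k hk) with
      ⟨i, him, hi⟩ | ⟨t, ht, htm, htB⟩
    · exact absurd (Set.mem_biUnion (mem_range.2 him) hi) hx
    · exact Set.mem_biUnion (mem_Ioo.2 ⟨ht, htm⟩)
        (Set.mem_vadd_set_iff_neg_vadd_mem.2 (by rwa [neg_neg]))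
  have hsmall : m * μ B < ε := by
    refine lt_of_mul_lt_mul_left (a := (M : ℝ≥0∞)) ?_ bot_le
    calc (M : ℝ≥0∞) * (m * μ B) = m * (M * μ B) := mul_left_comm _ _ _
      _ ≤ m * μ Set.univ := by gcongr; exact hBdisj.natCast_mul_measure_le hBm
      _ < M * ε := hM
  calc μ (⋃ i ∈ range m, (i : ℤ) +ᵥ towerBase B m)ᶜ ≤ μ (⋃ t ∈ Ioo 0 m, -(t : ℤ) +ᵥ B) :=
        measure_mono_ae hcover
    _ ≤ #(Ioo 0 m) * μ B := measure_biUnion_vadd_le _ _ _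
    _ ≤ m * μ B := by gcongr; simp
    _ ≤ ε := hsmall.le

theorem measure_biUnion_range_mul_vadd_le [IsProbabilityMeasure μ] {c N ℓ : ℕ} {R : Set X}
    (hR : DisjointTranslates (N * ℓ) R) (hRm : MeasurableSet R) {ε : ℝ} (hε : 0 ≤ ε)
    (hNε : c ≤ N * ε) :
    μ (⋃ k ∈ range (c * ℓ), (k : ℤ) +ᵥ R) ≤ ENNReal.ofReal ε := by
  have hc : (c : ℝ≥0∞) ≤ ENNReal.ofReal ε * N := by
    rw [← ENNReal.ofReal_natCast c, ← ENNReal.ofReal_natCast N, ← ENNReal.ofReal_mul hε]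
    exact ENNReal.ofReal_le_ofReal (by linarith)
  calc μ (⋃ k ∈ range (c * ℓ), (k : ℤ) +ᵥ R) ≤ #(range (c * ℓ)) * μ R :=
        measure_biUnion_vadd_le _ _ _
    _ = c * ℓ * μ R := by simp
    _ ≤ ENNReal.ofReal ε * N * ℓ * μ R := by gcongr
    _ = ENNReal.ofReal ε * ((N * ℓ : ℕ) * μ R) := by push_cast; ring
    _ ≤ ENNReal.ofReal ε * 1 := by
        gcongr
        simpa using hR.natCast_mul_measure_le (μ := μ) hRm
    _ = ENNReal.ofReal ε := mul_one _

end Measure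

theorem ofReal_one_sub_le_of_measure_compl_le {X : Type*} [MeasurableSpace X] {μ : Measure X}
    [IsProbabilityMeasure μ] {s : Set X} (hs : MeasurableSet s) {ε : ℝ} (hε : 0 ≤ ε)
    (h : μ sᶜ ≤ ENNReal.ofReal ε) : ENNReal.ofReal (1 - ε) ≤ μ s :=
  calc ENNReal.ofReal (1 - ε) = 1 - ENNReal.ofReal ε := by
        rw [ENNReal.ofReal_sub _ hε, ENNReal.ofReal_one]
    _ ≤ 1 - μ sᶜ := tsub_le_tsub_left h 1
    _ = μ s := by rw [← prob_compl_eq_one_sub hs.compl, compl_compl]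

noncomputable def block (ℓ n : ℕ) : Finset ℤ :=
  Finset.Icc (-(n * ℓ : ℤ)) (-(n * ℓ : ℤ) + ℓ - 1)

theorem card_block (ℓ n : ℕ) : #(block ℓ n) = ℓ := by
  simp [block, Int.card_Icc]

/-- A point at height `j` of the tower over `R` sees `block ℓ (j / ℓ)` at the heights
`j % ℓ, …, j % ℓ + ℓ - 1 < 2 ℓ`. -/
theorem iUnion_vadd_subset_setOf_block {X : Type*} [AddAction ℤ X] (R : Set X) (N ℓ : ℕ) :
    (⋃ j ∈ range (N * ℓ), (j : ℤ) +ᵥ R) ⊆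
      {x | ∃ n < N, ∀ i ∈ block ℓ n, i +ᵥ x ∈ ⋃ k ∈ range (2 * ℓ), (k : ℤ) +ᵥ R} := by
  intro x hx
  obtain ⟨j, hj, hjR⟩ := Set.mem_iUnion₂.1 hx
  rw [mem_range] at hj
  have hℓ : 0 < ℓ := Nat.pos_of_ne_zero (by rintro rfl; simp at hj)
  have hdiv := Nat.div_add_mod' j ℓ
  have hmod := Nat.mod_lt j hℓ
  refine ⟨j / ℓ, (Nat.div_lt_iff_lt_mul hℓ).2 hj, fun i hi => ?_⟩
  rw [block, mem_Icc] at hi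
  obtain ⟨k, hk⟩ : ∃ k : ℕ, (k : ℤ) = i + j := ⟨(i + j).toNat, by omega⟩
  refine Set.mem_biUnion (mem_range.2 (show k < 2 * ℓ by omega)) ?_
  rw [hk, ← vadd_vadd]
  exact Set.vadd_mem_vadd_set hjR

/-- Rokhlin-tower covering lemma. For every `h : ℕ → ℕ` and `ε > 0`
there are `N` and finite intervals `D_0, …, D_{N−1} ⊆ ℤ` with `|D_n| ≥ h n`, such
that for every free p.m.p. action of `ℤ` on a standard probability space `(X, μ)`
there is a Borel set `A` with `μ(A) ≤ ε` and
`μ {x : D_n · x ⊆ A for some n < N} ≥ 1 − ε`. -/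
theorem rokhlin_tower_covering
    (h : ℕ → ℕ) (ε : ℝ) (hε : 0 < ε) :
    ∃ (N : ℕ) (D : ℕ → Finset ℤ), 0 < N ∧
      (∀ n < N, ∃ s ℓ : ℤ, 0 < ℓ ∧ D n = Finset.Icc s (s + ℓ - 1)) ∧
      (∀ n < N, h n ≤ (D n).card) ∧
      ∀ (X : Type) [MeasurableSpace X] [StandardBorelSpace X]
        (μ : Measure X) [IsProbabilityMeasure μ] (a : ℤ → X → X),
        (∀ x : X, a 0 x = x) →
        (∀ (m n : ℤ) (x : X), a (m + n) x = a m (a n x)) →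
        (∀ n : ℤ, MeasurePreserving (a n) μ μ) →
        (∀ᵐ x ∂μ, ∀ n : ℤ, n ≠ 0 → a n x ≠ x) →
        ∃ A : Set X, MeasurableSet A ∧ μ A ≤ ENNReal.ofReal ε ∧
          ENNReal.ofReal (1 - ε) ≤ μ {x | ∃ n < N, ∀ i ∈ D n, a i x ∈ A} := by
  set N := ⌈2 / ε⌉₊
  set ℓ := max 1 ((range N).sup h)
  have hℓ : 0 < ℓ := lt_max_of_lt_left one_pos
  refine ⟨N, block ℓ, Nat.ceil_pos.2 (by positivity),
    fun n _ => ⟨-(n * ℓ : ℤ), ℓ, by exact_mod_cast hℓ, rfl⟩,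
    fun n hn => by
      rw [card_block]; exact (le_sup (mem_range.2 hn)).trans (le_max_right _ _), ?_⟩
  intro X _ _ μ _ a h0 hadd hmp hfree
  let : AddAction ℤ X := { vadd := a, zero_vadd := h0, add_vadd := hadd }
  have : MeasurableConstVAdd ℤ X := ⟨fun n => (hmp n).measurable⟩
  have : VAddInvariantMeasure ℤ X μ :=
    ⟨fun n _ hs => (hmp n).measure_preimage hs.nullMeasurableSet⟩
  obtain ⟨R, hRm, hRdisj, hRcompl⟩ := exists_rokhlin_tower hfree (m := N * ℓ) (by positivity)
    (ENNReal.ofReal_pos.2 hε).ne'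
  refine ⟨⋃ k ∈ range (2 * ℓ), (k : ℤ) +ᵥ R, measurableSet_biUnion _ fun k _ => hRm.const_vadd _,
    measure_biUnion_range_mul_vadd_le hRdisj hRm hε.le
      (by exact_mod_cast (div_le_iff₀ hε).1 (Nat.le_ceil _)), ?_⟩
  have hT : MeasurableSet (⋃ j ∈ range (N * ℓ), (j : ℤ) +ᵥ R) :=
    measurableSet_biUnion _ fun j _ => hRm.const_vadd _
  exact (ofReal_one_sub_le_of_measure_compl_le hT hε.le hRcompl).trans
    (measure_mono (iUnion_vadd_subset_setOf_block R N ℓ))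
end
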